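/- arXiv:1110.5036 — 11 statements merged into one kernel-verified Lean document; each statement's English description precedes it below -/
import Mathlib

section
/- Let H be a complex Hilbert space and let A be an invertible bounded linear operator on H. If w(A) ≤ 1 and w(A⁻¹) ≤ 1, then A is unitary. -/
/-!
Stampfli's argument. For fixed `g` put `x_j = B^j g`, so that `B` shifts the chain forward and
`A = B⁻¹` shifts it back. For real coefficients `c_j` vanishing at `0` and `L`, and `ψ` a
primitive character of `ZMod n`, the vectors `u_i = ∑_j ψ(ij) c_j x_j` satisfy
`A u_i = ψ(i) ∑_j ψ(ij) c_{j+1} x_j`; averaging `|⟪u_i, A u_i⟫| ≤ ‖u_i‖²` over `i` and applying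
Parseval kills the cross terms and leaves `∑ c_j c_{j+1} ‖x_j‖² ≤ ∑ c_j² ‖x_j‖²`, and `B` gives
the same with `‖x_{j+1}‖²` on the left. With `q_j = ‖x_j‖` and `c_j = d_j / q_j` the sum of the
two reads `∑ d_j d_{j+1} (q_j - q_{j+1})² / (q_j q_{j+1}) ≤ ∑ (d_{j+1} - d_j)²`. Taking for `d`
the tent `min(j, 2m+1-j)` centred where `x_m = f` and `x_{m+1} = B f` gives
`m² (‖f‖ - ‖B f‖)² ≤ (2m+1) ‖f‖ ‖B f‖` for every `m`, so `B`, and symmetrically `A`, is an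
isometry.
-/

open scoped InnerProductSpace
open Finset

theorem Finset.sum_range_succ_eq_sum_range {M : Type*} [AddCancelCommMonoid M] (f : ℕ → M)
    {L : ℕ} (h : f 0 = f L) : ∑ j ∈ range L, f (j + 1) = ∑ j ∈ range L, f j := by
  have := (sum_range_succ' f L).symm.trans (sum_range_succ f L)
  rwa [h, add_left_inj] at this

theorem norm_inner_self_apply_le_norm_sq {𝕜 E : Type*} [RCLike 𝕜] [NormedAddCommGroup E]
    [InnerProductSpace 𝕜 E] {T : E →L[𝕜] E} (hT : ∀ h : E, ‖h‖ = 1 → ‖⟪h, T h⟫_𝕜‖ ≤ 1)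
    (h : E) : ‖⟪h, T h⟫_𝕜‖ ≤ ‖h‖ ^ 2 := by
  rcases eq_or_ne h 0 with rfl | hh
  · simp
  have hn : 0 < ‖h‖ := norm_pos_iff.2 hh
  have hu := hT (((‖h‖⁻¹ : ℝ) : 𝕜) • h) (by simp [norm_smul, hn.ne'])
  rw [map_smul, inner_smul_real_left, inner_smul_real_right, norm_smul, norm_smul,
    Real.norm_of_nonneg (inv_nonneg.2 hn.le)] at hu
  calc ‖⟪h, T h⟫_𝕜‖ = ‖h‖ ^ 2 * (‖h‖⁻¹ * (‖h‖⁻¹ * ‖⟪h, T h⟫_𝕜‖)) := by field_simp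
    _ ≤ ‖h‖ ^ 2 * 1 := by gcongr
    _ = ‖h‖ ^ 2 := mul_one _

section Fourier

variable {𝕜 H : Type*} [RCLike 𝕜] [NormedAddCommGroup H] [InnerProductSpace 𝕜 H] {n : ℕ}

noncomputable def fourierPoly (ψ : AddChar (ZMod n) 𝕜) (L : ℕ) (y : ℕ → H) (i : ZMod n) : H :=
  ∑ j ∈ range L, ψ (i * j) • y j

theorem smul_fourierPoly_succ (ψ : AddChar (ZMod n) 𝕜) {L : ℕ} {y : ℕ → H} (h0 : y 0 = 0)
    (hL : y L = 0) (i : ZMod n) :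
    ψ i • fourierPoly ψ L (fun j => y (j + 1)) i = fourierPoly ψ L y i := by
  have hshift : ∀ j : ℕ, ψ i * ψ (i * j) = ψ (i * (j + 1 : ℕ)) := fun j => by
    rw [← AddChar.map_add_eq_mul]; push_cast; ring_nf
  simp only [fourierPoly, smul_sum, smul_smul, hshift]
  exact sum_range_succ_eq_sum_range (fun j => ψ (i * j) • y j) (by simp [h0, hL])

variable [NeZero n]

theorem sum_inner_fourierPoly {ψ : AddChar (ZMod n) 𝕜} (hψ : ψ.IsPrimitive) {L : ℕ} (hL : L ≤ n)
    (a b : ℕ → H) :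
    ∑ i, ⟪fourierPoly ψ L a i, fourierPoly ψ L b i⟫_𝕜 = n * ∑ j ∈ range L, ⟪a j, b j⟫_𝕜 := by
  have hchar : ∀ (i : ZMod n) (j k : ℕ),
      ψ (i * k) * starRingEnd 𝕜 (ψ (i * j)) = ψ (i * ((k : ZMod n) - j)) := fun i j k => by
    rw [← AddChar.map_neg_eq_conj, ← AddChar.map_add_eq_mul]; ring_nf
  have horth : ∀ j ∈ range L, ∀ k ∈ range L, ∑ i : ZMod n, ψ (i * ((k : ZMod n) - j)) =
      if k = j then (n : 𝕜) else 0 := fun j hj k hk => by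
    have hkj : (k : ZMod n) - j = 0 ↔ k = j := by
      rw [sub_eq_zero, ZMod.natCast_eq_natCast_iff', Nat.mod_eq_of_lt (by simp at hk; omega),
        Nat.mod_eq_of_lt (by simp at hj; omega)]
    simp only [AddChar.sum_mulShift _ hψ, hkj, ZMod.card]
    split_ifs <;> simp
  simp only [fourierPoly, sum_inner, inner_sum, inner_smul_left, inner_smul_right, mul_sum,
    ← mul_assoc, hchar]
  rw [sum_comm]
  refine sum_congr rfl fun k hk => ?_
  rw [sum_comm]
  simp only [← sum_mul]
  rw [sum_congr rfl fun j hj => by rw [horth j hj k hk]]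
  simp [ite_mul, hk]

open RCLike in
theorem sum_mul_mul_norm_sq_le_of_norm_inner_fourierPoly_le {ψ : AddChar (ZMod n) 𝕜}
    (hψ : ψ.IsPrimitive) {L : ℕ} (hL : L ≤ n) (c c' : ℕ → ℝ) (y : ℕ → H)
    (h : ∀ i, ‖⟪fourierPoly ψ L (fun j => (c j : 𝕜) • y j) i,
      fourierPoly ψ L (fun j => (c' j : 𝕜) • y j) i⟫_𝕜‖ ≤
        ‖fourierPoly ψ L (fun j => (c j : 𝕜) • y j) i‖ ^ 2) :
    ∑ j ∈ range L, c j * c' j * ‖y j‖ ^ 2 ≤ ∑ j ∈ range L, c j ^ 2 * ‖y j‖ ^ 2 := by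
  have hn : (0 : ℝ) < n := by exact_mod_cast Nat.pos_of_neZero n
  refine le_of_mul_le_mul_left ?_ hn
  have hinner : ∀ (r s : ℝ) (v : H),
      ⟪(r : 𝕜) • v, (s : 𝕜) • v⟫_𝕜 = ((r * s * ‖v‖ ^ 2 : ℝ) : 𝕜) := fun r s v => by
    rw [inner_smul_real_left, inner_smul_real_right, inner_self_eq_norm_sq_to_K]
    simp only [real_smul_eq_coe_mul]
    push_cast; ring
  have parseval : ∀ c' : ℕ → ℝ, ∑ i, re ⟪fourierPoly ψ L (fun j => (c j : 𝕜) • y j) i,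
      fourierPoly ψ L (fun j => (c' j : 𝕜) • y j) i⟫_𝕜 =
        n * ∑ j ∈ range L, c j * c' j * ‖y j‖ ^ 2 := fun c' => by
    rw [← map_sum, sum_inner_fourierPoly hψ hL]
    simp only [hinner]
    rw [← ofReal_sum, ← ofReal_natCast, ← ofReal_mul, ofReal_re]
  calc (n : ℝ) * ∑ j ∈ range L, c j * c' j * ‖y j‖ ^ 2
      = ∑ i, re ⟪fourierPoly ψ L (fun j => (c j : 𝕜) • y j) i,
          fourierPoly ψ L (fun j => (c' j : 𝕜) • y j) i⟫_𝕜 := by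
        rw [parseval]
    _ ≤ ∑ i, ‖fourierPoly ψ L (fun j => (c j : 𝕜) • y j) i‖ ^ 2 :=
        sum_le_sum fun i _ => (re_le_norm _).trans (h i)
    _ = ∑ i, re ⟪fourierPoly ψ L (fun j => (c j : 𝕜) • y j) i,
          fourierPoly ψ L (fun j => (c j : 𝕜) • y j) i⟫_𝕜 := by
        simp only [inner_self_eq_norm_sq]
    _ = n * ∑ j ∈ range L, c j ^ 2 * ‖y j‖ ^ 2 := by
        rw [parseval]; simp only [sq]

theorem norm_inner_smul_right_addChar (ψ : AddChar (ZMod n) 𝕜) (u v : H) (i : ZMod n) :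
    ‖⟪u, ψ i • v⟫_𝕜‖ = ‖⟪u, v⟫_𝕜‖ := by
  rw [inner_smul_right, norm_mul, AddChar.norm_apply, one_mul]

end Fourier

section Chain

variable {H : Type*} [NormedAddCommGroup H] [InnerProductSpace ℂ H] {T : H →L[ℂ] H}

theorem sum_mul_mul_norm_sq_le_of_apply_succ_eq (hT : ∀ h, ‖⟪h, T h⟫_ℂ‖ ≤ ‖h‖ ^ 2)
    {x : ℕ → H} (hx : ∀ j, T (x (j + 1)) = x j) {c : ℕ → ℝ} {L : ℕ} (h0 : c 0 = 0)
    (hL : c L = 0) :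
    ∑ j ∈ range L, c j * c (j + 1) * ‖x j‖ ^ 2 ≤ ∑ j ∈ range L, c j ^ 2 * ‖x j‖ ^ 2 := by
  obtain ⟨ψ, hψ⟩ : ∃ ψ : AddChar (ZMod (L + 1)) ℂ, ψ.IsPrimitive :=
    ⟨_, ZMod.isPrimitive_stdAddChar _⟩
  refine sum_mul_mul_norm_sq_le_of_norm_inner_fourierPoly_le hψ L.le_succ c (fun j => c (j + 1)) x
    fun i => ?_
  have hTu : T (fourierPoly ψ L (fun j => (c j : ℂ) • x j) i) =
      ψ i • fourierPoly ψ L (fun j => (c (j + 1) : ℂ) • x j) i := by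
    have hb : (fun j => (c (j + 1) : ℂ) • x j) = fun j => (c (j + 1) : ℂ) • T (x (j + 1)) := by
      simp only [hx]
    rw [hb, smul_fourierPoly_succ ψ (y := fun j => (c j : ℂ) • T (x j)) (by simp [h0])
      (by simp [hL])]
    simp [fourierPoly, map_sum, map_smul]
  simp only [RCLike.ofReal_eq_complex_ofReal]
  rw [← norm_inner_smul_right_addChar ψ _ _ i, ← hTu]
  exact hT _

theorem sum_mul_mul_norm_sq_succ_le_of_apply_eq_succ (hT : ∀ h, ‖⟪h, T h⟫_ℂ‖ ≤ ‖h‖ ^ 2)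
    {x : ℕ → H} (hx : ∀ j, T (x j) = x (j + 1)) {c : ℕ → ℝ} {L : ℕ} (h0 : c 0 = 0)
    (hL : c L = 0) :
    ∑ j ∈ range L, c j * c (j + 1) * ‖x (j + 1)‖ ^ 2 ≤ ∑ j ∈ range L, c j ^ 2 * ‖x j‖ ^ 2 := by
  obtain ⟨ψ, hψ⟩ : ∃ ψ : AddChar (ZMod (L + 1)) ℂ, ψ.IsPrimitive :=
    ⟨_, ZMod.isPrimitive_stdAddChar _⟩
  have hshift : ∑ j ∈ range L, c (j + 1) ^ 2 * ‖x (j + 1)‖ ^ 2 =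
      ∑ j ∈ range L, c j ^ 2 * ‖x j‖ ^ 2 :=
    sum_range_succ_eq_sum_range (fun j => c j ^ 2 * ‖x j‖ ^ 2) (by simp [h0, hL])
  simp only [mul_comm (c _) (c (_ + 1))]
  rw [← hshift]
  refine sum_mul_mul_norm_sq_le_of_norm_inner_fourierPoly_le hψ L.le_succ (fun j => c (j + 1)) c
    (fun j => x (j + 1)) fun i => ?_
  have hTu : fourierPoly ψ L (fun j => (c j : ℂ) • x (j + 1)) i =
      T (ψ i • fourierPoly ψ L (fun j => (c (j + 1) : ℂ) • x (j + 1)) i) := by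
    rw [smul_fourierPoly_succ ψ (y := fun j => (c j : ℂ) • x j) (by simp [h0]) (by simp [hL])]
    simp [fourierPoly, map_sum, map_smul, hx]
  simp only [RCLike.ofReal_eq_complex_ofReal]
  rw [hTu, map_smul, norm_inner_smul_right_addChar]
  exact hT _

end Chain

theorem sum_mul_mul_sq_sub_div_le_sum_sq_sub {q : ℕ → ℝ} (hq : ∀ j, 0 < q j) {L : ℕ}
    (hM : ∀ c : ℕ → ℝ, c 0 = 0 → c L = 0 →
      ∑ j ∈ range L, c j * c (j + 1) * (q j ^ 2 + q (j + 1) ^ 2) ≤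
        2 * ∑ j ∈ range L, c j ^ 2 * q j ^ 2)
    {d : ℕ → ℝ} (h0 : d 0 = 0) (hL : d L = 0) :
    ∑ j ∈ range L, d j * d (j + 1) * (q j - q (j + 1)) ^ 2 / (q j * q (j + 1)) ≤
      ∑ j ∈ range L, (d (j + 1) - d j) ^ 2 := by
  have h := hM (fun j => d j / q j) (by simp [h0]) (by simp [hL])
  have hcross : ∀ j, d j / q j * (d (j + 1) / q (j + 1)) * (q j ^ 2 + q (j + 1) ^ 2) =
      2 * (d j * d (j + 1)) + d j * d (j + 1) * (q j - q (j + 1)) ^ 2 / (q j * q (j + 1)) :=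
    fun j => by
      have := (hq j).ne'
      have := (hq (j + 1)).ne'
      field_simp
      ring
  have hdiag : ∀ j, (d j / q j) ^ 2 * q j ^ 2 = d j ^ 2 := fun j => by
    have := (hq j).ne'
    field_simp
  have hshift := sum_range_succ_eq_sum_range (fun j => d j ^ 2) (L := L) (by simp [h0, hL])
  simp only [hcross, hdiag, sum_add_distrib, ← mul_sum] at h
  have hinc : ∑ j ∈ range L, (d (j + 1) - d j) ^ 2 =
      2 * ∑ j ∈ range L, d j ^ 2 - 2 * ∑ j ∈ range L, d j * d (j + 1) := by
    have hsq : ∀ j, (d (j + 1) - d j) ^ 2 = d (j + 1) ^ 2 + d j ^ 2 - 2 * (d j * d (j + 1)) :=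
      fun j => by ring
    simp only [hsq, sum_sub_distrib, sum_add_distrib, ← mul_sum, hshift]
    ring
  linarith

theorem sq_mul_sq_sub_le {q : ℕ → ℝ} (hq : ∀ j, 0 < q j) {m : ℕ}
    (hM : ∀ c : ℕ → ℝ, c 0 = 0 → c (2 * m + 1) = 0 →
      ∑ j ∈ range (2 * m + 1), c j * c (j + 1) * (q j ^ 2 + q (j + 1) ^ 2) ≤
        2 * ∑ j ∈ range (2 * m + 1), c j ^ 2 * q j ^ 2) :
    (m : ℝ) ^ 2 * (q m - q (m + 1)) ^ 2 ≤ (2 * m + 1) * (q m * q (m + 1)) := by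
  set d : ℕ → ℝ := fun j => min (j : ℝ) (2 * m + 1 - j)
  have hd_nonneg : ∀ j ≤ 2 * m + 1, 0 ≤ d j := fun j hj => by
    have : (j : ℝ) ≤ 2 * m + 1 := by exact_mod_cast hj
    exact le_min (by positivity) (by linarith)
  have hd_step : ∀ j, (d (j + 1) - d j) ^ 2 ≤ 1 := fun j => by
    refine sq_le_one_iff_abs_le_one _ |>.2 ((abs_min_sub_min_le_max _ _ _ _).trans ?_)
    push_cast
    ring_nf
    simp
  have hsum := sum_mul_mul_sq_sub_div_le_sum_sq_sub hq hM (d := d) (by simp [d]; positivity)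
    (by simp [d]; positivity)
  have hterm : d m * d (m + 1) * (q m - q (m + 1)) ^ 2 / (q m * q (m + 1)) ≤
      ∑ j ∈ range (2 * m + 1), d j * d (j + 1) * (q j - q (j + 1)) ^ 2 / (q j * q (j + 1)) := by
    refine single_le_sum
      (f := fun j => d j * d (j + 1) * (q j - q (j + 1)) ^ 2 / (q j * q (j + 1)))
      (fun j hj => ?_) (mem_range.2 (by omega))
    have := hd_nonneg j (by simp at hj; omega)
    have := hd_nonneg (j + 1) (by simp at hj; omega)
    have := hq j
    have := hq (j + 1)
    positivity
  have hdm : d m = m := min_eq_left (by linarith)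
  have hdm' : d (m + 1) = m := by
    simp only [d]; push_cast; rw [min_eq_right (by linarith)]; ring
  have hbound : ∑ j ∈ range (2 * m + 1), (d (j + 1) - d j) ^ 2 ≤ 2 * m + 1 :=
    (sum_le_sum fun j _ => hd_step j).trans (by simp)
  rw [hdm, hdm', ← sq] at hterm
  have := hterm.trans (hsum.trans hbound)
  rwa [div_le_iff₀ (mul_pos (hq m) (hq (m + 1)))] at this

theorem eq_of_forall_sq_mul_sq_sub_le {a b : ℝ}
    (h : ∀ m : ℕ, (m : ℝ) ^ 2 * (a - b) ^ 2 ≤ (2 * m + 1) * (a * b)) : a = b := by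
  by_contra hne
  have ht : 0 < (a - b) ^ 2 := by positivity [sub_ne_zero.2 hne]
  have hs : 0 ≤ a * b := by simpa using h 0
  obtain ⟨m, hm⟩ := exists_nat_gt (3 * (a * b) / (a - b) ^ 2)
  rw [div_lt_iff₀ ht] at hm
  have := h (m + 1)
  push_cast at this
  nlinarith

section Isometry

variable {H : Type*} [NormedAddCommGroup H] [InnerProductSpace ℂ H]

theorem norm_apply_eq_of_numericalRadius_le_one {A B : H →L[ℂ] H} (hAB : A * B = 1)
    (hBA : B * A = 1) (hA : ∀ h, ‖⟪h, A h⟫_ℂ‖ ≤ ‖h‖ ^ 2) (hB : ∀ h, ‖⟪h, B h⟫_ℂ‖ ≤ ‖h‖ ^ 2)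
    (f : H) : ‖B f‖ = ‖f‖ := by
  rcases eq_or_ne f 0 with rfl | hf
  · simp
  have hcomm : Commute A B := hAB.trans hBA.symm
  have hBA_pow : ∀ k, B ^ k * A ^ k = 1 := fun k => by rw [← hcomm.symm.mul_pow, hBA, one_pow]
  have hAB_pow : ∀ k, A ^ k * B ^ k = 1 := fun k => by rw [← hcomm.mul_pow, hAB, one_pow]
  refine (eq_of_forall_sq_mul_sq_sub_le fun m => ?_).symm
  set x : ℕ → H := fun j => (B ^ j) ((A ^ m) f)
  have hxm : x m = f := by
    simp only [x]
    rw [← mul_apply_eq_comp, hBA_pow, one_apply_eq_self]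
  have hBx : ∀ j, B (x j) = x (j + 1) := fun j => by
    simp only [x, pow_succ', mul_apply_eq_comp]
  have hAx : ∀ j, A (x (j + 1)) = x j := fun j => by
    rw [← hBx, ← mul_apply_eq_comp, hAB, one_apply_eq_self]
  have hx_pos : ∀ j, 0 < ‖x j‖ := fun j => norm_pos_iff.2 fun hxj => hf <| by
    have hg : (A ^ m) f = 0 := calc
      (A ^ m) f = (A ^ j * B ^ j) ((A ^ m) f) := by rw [hAB_pow, one_apply_eq_self]
      _ = (A ^ j) (x j) := mul_apply_eq_comp _ _ _
      _ = 0 := by rw [hxj, map_zero]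
    rw [← hxm]
    exact (congrArg (B ^ m) hg).trans (map_zero _)
  have key := sq_mul_sq_sub_le (q := fun j => ‖x j‖) hx_pos (m := m) fun c h0 hL => by
    have hbwd := sum_mul_mul_norm_sq_le_of_apply_succ_eq hA hAx h0 hL
    have hfwd := sum_mul_mul_norm_sq_succ_le_of_apply_eq_succ hB hBx h0 hL
    simp only [mul_add, sum_add_distrib]
    linarith
  simpa [hxm, ← hBx m] using key

end Isometry

/-- (Stampfli) If `A` is an invertible bounded operator on a complex Hilbert space with
numerical radius `w(A) ≤ 1` and `w(A⁻¹) ≤ 1`, then `A` is unitary. -/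
theorem unitary_of_numericalRadius_le_one
    {H : Type*} [NormedAddCommGroup H] [InnerProductSpace ℂ H] [CompleteSpace H]
    (A B : H →L[ℂ] H) (hAB : A * B = 1) (hBA : B * A = 1)
    (hwA : ∀ h : H, ‖h‖ = 1 → ‖(⟪h, A h⟫_ℂ)‖ ≤ 1)
    (hwB : ∀ h : H, ‖h‖ = 1 → ‖(⟪h, B h⟫_ℂ)‖ ≤ 1) :
    ContinuousLinearMap.adjoint A * A = 1 ∧ A * ContinuousLinearMap.adjoint A = 1 := by
  have hA_isometry : ∀ f, ‖A f‖ = ‖f‖ :=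
    norm_apply_eq_of_numericalRadius_le_one hBA hAB (norm_inner_self_apply_le_norm_sq hwB)
      (norm_inner_self_apply_le_norm_sq hwA)
  have hadj_mul : ContinuousLinearMap.adjoint A * A = 1 :=
    (ContinuousLinearMap.norm_map_iff_adjoint_comp_self A).1 hA_isometry
  have hadj : ContinuousLinearMap.adjoint A = B := left_inv_eq_right_inv hadj_mul hAB
  exact ⟨hadj_mul, hadj ▸ hAB⟩
end

section
/- Let r ≥ 1, set y = √(r² − 1), and let A be the 2×2 complex matrix A = [[1, 2y], [0, −1]]. Then A is its own inverse (A·A = I), its numerical radius satisfies w(A) = r (so also w(A⁻¹) = r), and its operator norm satisfies ‖A‖ = r + √(r² − 1) = y + √(1 + y²). -/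
/-!
On a unit vector `h = (a, b)` one has `⟪h, A h⟫ = t + 2y · conj a · b` with `t = |a|² - |b|²`
and `t² + 4 |conj a · b|² = (|a|² + |b|²)² = 1`, so Cauchy–Schwarz bounds the numerical radius
by `√(1 + y²)`; equality holds along an eigenvector of the Hermitian part `[[1, y], [y, -1]]`.
For the norm, `s = y + √(1 + y²)` is the positive root of `s² = 1 + 2ys`, so
`A (1, s) = (s², -s) = s (s, -1)` stretches `(1, s)` by exactly `s`, while
`s (s² ‖x‖² - ‖A x‖²) ≥ 2y (s |x₀| - |x₁|)² ≥ 0` for every `x`.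
-/

open scoped InnerProductSpace ComplexConjugate
open Matrix

noncomputable def numericalRadius {𝕜 E : Type*} [RCLike 𝕜] [NormedAddCommGroup E]
    [InnerProductSpace 𝕜 E] (T : E →L[𝕜] E) : ℝ :=
  sSup {x : ℝ | ∃ h : E, ‖h‖ = 1 ∧ x = ‖⟪h, T h⟫_𝕜‖}

section NumericalRadius

variable {𝕜 E : Type*} [RCLike 𝕜] [NormedAddCommGroup E] [InnerProductSpace 𝕜 E]

theorem norm_inner_smul_apply_smul (T : E →L[𝕜] E) (c : 𝕜) (h : E) :
    ‖⟪c • h, T (c • h)⟫_𝕜‖ = ‖c‖ ^ 2 * ‖⟪h, T h⟫_𝕜‖ := by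
  rw [map_smul, inner_smul_left, inner_smul_right, norm_mul, norm_mul, RCLike.norm_conj]
  ring

theorem numericalRadius_eq_of_le_of_eq {T : E →L[𝕜] E} {w : ℝ}
    (h_le : ∀ h : E, ‖h‖ = 1 → ‖⟪h, T h⟫_𝕜‖ ≤ w)
    {h₀ : E} (h₀_ne : h₀ ≠ 0) (h₀_eq : ‖⟪h₀, T h₀⟫_𝕜‖ = w * ‖h₀‖ ^ 2) :
    numericalRadius T = w := by
  refine IsGreatest.csSup_eq ⟨⟨(‖h₀‖⁻¹ : 𝕜) • h₀, norm_smul_inv_norm h₀_ne, ?_⟩, ?_⟩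
  · have : ‖h₀‖ ≠ 0 := norm_ne_zero_iff.mpr h₀_ne
    rw [norm_inner_smul_apply_smul, h₀_eq, norm_inv, RCLike.norm_ofReal, abs_norm]
    field_simp
  · rintro x ⟨h, hh, rfl⟩
    exact h_le h hh

end NumericalRadius

theorem ContinuousLinearMap.opNorm_eq_of_le_of_eq {𝕜 E F : Type*} [NontriviallyNormedField 𝕜]
    [NormedAddCommGroup E] [NormedSpace 𝕜 E] [NormedAddCommGroup F] [NormedSpace 𝕜 F]
    {T : E →L[𝕜] F} {M : ℝ} (hM : 0 ≤ M) (h_le : ∀ x, ‖T x‖ ≤ M * ‖x‖)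
    {x₀ : E} (hx₀ : x₀ ≠ 0) (h_eq : ‖T x₀‖ = M * ‖x₀‖) : ‖T‖ = M :=
  le_antisymm (T.opNorm_le_bound hM h_le) <|
    le_of_mul_le_mul_right (h_eq ▸ T.le_opNorm x₀) (norm_pos_iff.mpr hx₀)

noncomputable def triangularInvolution (y : ℝ) : Matrix (Fin 2) (Fin 2) ℂ :=
  !![1, 2 * (y : ℂ); 0, -1]

section TriangularInvolution

variable (y : ℝ)

theorem triangularInvolution_mul_self :
    triangularInvolution y * triangularInvolution y = 1 := by
  rw [triangularInvolution, one_fin_two, mul_fin_two]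
  norm_num

theorem toEuclideanCLM_triangularInvolution_apply (x : EuclideanSpace ℂ (Fin 2)) :
    toEuclideanCLM (𝕜 := ℂ) (triangularInvolution y) x = !₂[x 0 + 2 * y * x 1, -x 1] := by
  ext i
  fin_cases i <;> simp [triangularInvolution, ofLp_toEuclideanCLM, mulVec, dotProduct]

theorem inner_toEuclideanCLM_triangularInvolution_self (x : EuclideanSpace ℂ (Fin 2)) :
    ⟪x, toEuclideanCLM (𝕜 := ℂ) (triangularInvolution y) x⟫_ℂ =
      ((‖x 0‖ ^ 2 - ‖x 1‖ ^ 2 : ℝ) : ℂ) + 2 * y * (conj (x 0) * x 1) := by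
  rw [toEuclideanCLM_triangularInvolution_apply, PiLp.inner_apply, Fin.sum_univ_two]
  simp only [RCLike.inner_apply]
  push_cast
  rw [← Complex.mul_conj', ← Complex.mul_conj']
  ring

theorem norm_sq_toEuclideanCLM_triangularInvolution (x : EuclideanSpace ℂ (Fin 2)) :
    ‖toEuclideanCLM (𝕜 := ℂ) (triangularInvolution y) x‖ ^ 2 =
      ‖x 0 + 2 * y * x 1‖ ^ 2 + ‖x 1‖ ^ 2 := by
  rw [toEuclideanCLM_triangularInvolution_apply, EuclideanSpace.norm_sq_eq, Fin.sum_univ_two]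
  simp

theorem sq_norm_ofReal_add_two_mul_le (t y : ℝ) (z : ℂ) :
    ‖(t : ℂ) + 2 * y * z‖ ^ 2 ≤ (1 + y ^ 2) * (t ^ 2 + 4 * ‖z‖ ^ 2) := by
  have h_tri : ‖(t : ℂ) + 2 * y * z‖ ≤ |t| + 2 * |y| * ‖z‖ := by
    calc ‖(t : ℂ) + 2 * y * z‖ ≤ ‖(t : ℂ)‖ + ‖2 * (y : ℂ) * z‖ := norm_add_le _ _
      _ = |t| + 2 * |y| * ‖z‖ := by simp
  -- Cauchy–Schwarz for the vectors `(1, |y|)` and `(|t|, 2‖z‖)`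
  calc ‖(t : ℂ) + 2 * y * z‖ ^ 2 ≤ (|t| + 2 * |y| * ‖z‖) ^ 2 :=
        pow_le_pow_left₀ (norm_nonneg _) h_tri 2
    _ ≤ (1 + y ^ 2) * (t ^ 2 + 4 * ‖z‖ ^ 2) := by
        nlinarith [sq_nonneg (|y| * |t| - 2 * ‖z‖), sq_abs t, sq_abs y]

theorem norm_inner_toEuclideanCLM_triangularInvolution_self_le {x : EuclideanSpace ℂ (Fin 2)}
    (hx : ‖x‖ = 1) :
    ‖⟪x, toEuclideanCLM (𝕜 := ℂ) (triangularInvolution y) x⟫_ℂ‖ ≤ √(1 + y ^ 2) := by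
  have h_unit : ‖x 0‖ ^ 2 + ‖x 1‖ ^ 2 = 1 := by
    rw [← Fin.sum_univ_two (fun i => ‖x i‖ ^ 2), ← EuclideanSpace.norm_sq_eq, hx, one_pow]
  have h_bound := sq_norm_ofReal_add_two_mul_le (‖x 0‖ ^ 2 - ‖x 1‖ ^ 2) y (conj (x 0) * x 1)
  rw [norm_mul, RCLike.norm_conj] at h_bound
  rw [inner_toEuclideanCLM_triangularInvolution_self, Real.le_sqrt (norm_nonneg _) (by positivity)]
  calc _ ≤ _ := h_bound
    _ = (1 + y ^ 2) * (‖x 0‖ ^ 2 + ‖x 1‖ ^ 2) ^ 2 := by ring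
    _ = 1 + y ^ 2 := by rw [h_unit, one_pow, mul_one]

theorem numericalRadius_toEuclideanCLM_triangularInvolution :
    numericalRadius (toEuclideanCLM (𝕜 := ℂ) (triangularInvolution y)) = √(1 + y ^ 2) := by
  set r := √(1 + y ^ 2)
  have hr : r ^ 2 = 1 + y ^ 2 := Real.sq_sqrt (by positivity)
  have hr_pos : 0 < r := Real.sqrt_pos.mpr (by positivity)
  -- an eigenvector of the Hermitian part `[[1, y], [y, -1]]` for its eigenvalue `r`
  let x : EuclideanSpace ℂ (Fin 2) := !₂[(r + 1 : ℝ), y]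
  have hx0 : x 0 = ((r + 1 : ℝ) : ℂ) := rfl
  have hx1 : x 1 = (y : ℂ) := rfl
  have hx_ne : x ≠ 0 := fun h => by
    have : ((r + 1 : ℝ) : ℂ) = 0 := hx0 ▸ congrArg (· 0) h
    norm_cast at this
    linarith
  have hx_norm : ‖x‖ ^ 2 = 2 * r * (r + 1) := by
    rw [EuclideanSpace.norm_sq_eq, Fin.sum_univ_two, hx0, hx1, Complex.norm_real,
      Complex.norm_real, Real.norm_eq_abs, Real.norm_eq_abs, sq_abs, sq_abs]
    nlinarith
  refine numericalRadius_eq_of_le_of_eq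
    (fun h hh => norm_inner_toEuclideanCLM_triangularInvolution_self_le y hh) hx_ne ?_
  have h_val : (((r + 1) ^ 2 - y ^ 2 : ℝ) : ℂ) + 2 * y * (((r + 1 : ℝ) : ℂ) * y) =
      ((r * ‖x‖ ^ 2 : ℝ) : ℂ) := by
    rw [hx_norm]
    exact_mod_cast (by linear_combination (-(2 * r + 1)) * hr :
      (r + 1) ^ 2 - y ^ 2 + 2 * y * ((r + 1) * y) = r * (2 * r * (r + 1)))
  rw [inner_toEuclideanCLM_triangularInvolution_self, hx0, hx1, Complex.conj_ofReal,
    Complex.norm_real, Complex.norm_real, Real.norm_eq_abs, Real.norm_eq_abs, sq_abs, sq_abs,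
    h_val, Complex.norm_real, Real.norm_eq_abs, abs_of_nonneg (by positivity)]

theorem norm_toEuclideanCLM_triangularInvolution {y : ℝ} (hy : 0 ≤ y) :
    ‖toEuclideanCLM (𝕜 := ℂ) (triangularInvolution y)‖ = y + √(1 + y ^ 2) := by
  set s := y + √(1 + y ^ 2)
  have hs_sq : s ^ 2 = 1 + 2 * y * s := by
    linear_combination Real.sq_sqrt (show 0 ≤ 1 + y ^ 2 by positivity)
  have hs_pos : 0 < s := by positivity
  refine ContinuousLinearMap.opNorm_eq_of_le_of_eq hs_pos.le (fun x => ?_)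
    (x₀ := !₂[1, (s : ℂ)]) (fun h => by simpa using congrArg (· 0) h) ?_
  · set p := ‖x 0‖
    set q := ‖x 1‖
    have h_tri : ‖x 0 + 2 * y * x 1‖ ≤ p + 2 * y * q := by
      calc ‖x 0 + 2 * y * x 1‖ ≤ ‖x 0‖ + ‖2 * (y : ℂ) * x 1‖ := norm_add_le _ _
        _ = p + 2 * y * q := by simp [abs_of_nonneg hy, p, q]
    have h_gap : s * (s ^ 2 * (p ^ 2 + q ^ 2) - (p + 2 * y * q) ^ 2 - q ^ 2) =
        2 * y * (s * p - q) ^ 2 := by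
      linear_combination (s * p ^ 2 + (s + 2 * y) * q ^ 2) * hs_sq
    have h_gap_nonneg : 0 ≤ s ^ 2 * (p ^ 2 + q ^ 2) - (p + 2 * y * q) ^ 2 - q ^ 2 :=
      (mul_nonneg_iff_of_pos_left hs_pos).mp (h_gap ▸ by positivity)
    rw [← pow_le_pow_iff_left₀ (norm_nonneg _) (by positivity) two_ne_zero, mul_pow,
      norm_sq_toEuclideanCLM_triangularInvolution, EuclideanSpace.norm_sq_eq, Fin.sum_univ_two]
    nlinarith [pow_le_pow_left₀ (norm_nonneg _) h_tri 2]
  · rw [← pow_left_inj₀ (norm_nonneg _) (by positivity) two_ne_zero, mul_pow,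
      norm_sq_toEuclideanCLM_triangularInvolution, EuclideanSpace.norm_sq_eq, Fin.sum_univ_two]
    have h_first : (1 : ℂ) + 2 * y * s = ((s ^ 2 : ℝ) : ℂ) := by
      rw [hs_sq]
      push_cast
      ring
    change ‖(1 : ℂ) + 2 * y * s‖ ^ 2 + ‖(s : ℂ)‖ ^ 2 = s ^ 2 * (‖(1 : ℂ)‖ ^ 2 + ‖(s : ℂ)‖ ^ 2)
    rw [h_first, Complex.norm_real, Complex.norm_real, Real.norm_eq_abs, Real.norm_eq_abs, sq_abs,
      sq_abs, norm_one]
    ring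

/-- For `r ≥ 1` and `y = √(r² − 1)`, the matrix `A = [[1, 2y], [0, −1]]` is its own
inverse, has numerical radius `w(A) = r` and operator norm
`‖A‖ = r + √(r² − 1) = y + √(1 + y²)`. -/
theorem two_by_two_example (r : ℝ) (hr : 1 ≤ r)
    (y : ℝ) (hy : y = Real.sqrt (r ^ 2 - 1))
    (A : Matrix (Fin 2) (Fin 2) ℂ) (hA : A = !![1, 2 * (y : ℂ); 0, -1]) :
    A * A = 1 ∧
    sSup {x : ℝ | ∃ h : EuclideanSpace ℂ (Fin 2), ‖h‖ = 1 ∧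
        x = ‖(⟪h, Matrix.toEuclideanCLM (𝕜 := ℂ) A h⟫_ℂ)‖} = r ∧
    ‖Matrix.toEuclideanCLM (𝕜 := ℂ) A‖ = r + Real.sqrt (r ^ 2 - 1) ∧
    r + Real.sqrt (r ^ 2 - 1) = y + Real.sqrt (1 + y ^ 2) := by
  have hr_eq : r = √(1 + y ^ 2) := by
    rw [hy, Real.sq_sqrt (by nlinarith), add_sub_cancel, Real.sqrt_sq (by linarith)]
  subst hA
  refine ⟨triangularInvolution_mul_self y, ?_, ?_, ?_⟩
  · rw [hr_eq]
    exact numericalRadius_toEuclideanCLM_triangularInvolution y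
  · rw [← hy, hr_eq, add_comm]
    exact norm_toEuclideanCLM_triangularInvolution (hy ▸ Real.sqrt_nonneg _)
  · rw [← hy, hr_eq, add_comm]
end TriangularInvolution
end

section
/- Let 1 ≤ ρ ≤ 2, let H be a complex Hilbert space, and let A be an invertible bounded linear operator on H. If w_ρ(A) ≤ 1 and w_ρ(A⁻¹) ≤ 1, then A is unitary. -/
/-!
For `0 ≤ a ≤ t` one has `√((1 - 1/ρ)² a² + (2/ρ - 1) t²) ≥ a/ρ`, so the hypotheses bound the
numerical radii of `A` and of `B = A⁻¹` by one. For an orbit `v_k = Aᵏ g`, evaluating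
`⟪x, A x⟫` and `⟪x, B x⟫` at `x = ∑ₖ ζ^{km} c_k v_k`, `ζ` a root of unity, and averaging over `m`
gives, for all real weights `c`,
`∑ c_k c_{k+1} (‖v_k‖² + ‖v_{k+1}‖²) ≤ 2 ∑ c_k² ‖v_k‖²`.
For `c_k = u_k / ‖v_k‖` with `u` a tent of height `M` centred at `M`, this says
`M² (‖v_M‖ - ‖v_{M+1}‖)² / (‖v_M‖ ‖v_{M+1}‖) ≤ 2M + 1`; letting `M → ∞` shows that `A` is
isometric, and an invertible isometry is unitary.
-/

open scoped InnerProductSpace ComplexConjugate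
open Finset

theorem IsPrimitiveRoot.sum_pow_mul_conj_pow {ζ : ℂ} {N a b : ℕ} (hζ : IsPrimitiveRoot ζ N)
    (ha : a < N) (hb : b < N) :
    ∑ m ∈ range N, ζ ^ (a * m) * conj (ζ ^ (b * m)) = if a = b then (N : ℂ) else 0 := by
  have hζ0 : ζ ≠ 0 := hζ.ne_zero (by omega)
  have hterm : ∀ m, ζ ^ (a * m) * conj (ζ ^ (b * m)) = (ζ ^ a * (ζ ^ b)⁻¹) ^ m := fun m => by
    rw [map_pow, ← Complex.inv_eq_conj (hζ.norm'_eq_one (by omega)), mul_pow, inv_pow, inv_pow,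
      pow_mul, pow_mul]
  simp_rw [hterm]
  split_ifs with hab
  · simp [hab, hζ0]
  · have hw : ζ ^ a * (ζ ^ b)⁻¹ ≠ 1 := fun h =>
      hab (hζ.pow_inj ha hb (mul_inv_eq_one₀ (pow_ne_zero _ hζ0) |>.mp h))
    rw [geom_sum_eq hw, mul_pow, inv_pow, ← pow_mul, ← pow_mul, mul_comm a, mul_comm b,
      pow_mul, pow_mul, hζ.pow_eq_one]
    simp

theorem sum_range_sub_sq (u : ℕ → ℝ) (n : ℕ) :
    ∑ k ∈ range n, (u (k + 1) - u k) ^ 2 =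
      2 * ∑ k ∈ range (n + 1), u k ^ 2 - u 0 ^ 2 - u n ^ 2 - 2 * ∑ k ∈ range n, u k * u (k + 1) := by
  induction n with
  | zero => simp only [range_zero, sum_empty, zero_add, sum_range_one]; ring
  | succ n ih =>
    rw [sum_range_succ, ih, sum_range_succ _ (n + 1), sum_range_succ (fun k => u k * u (k + 1))]
    ring

theorem mul_sq_sub_div_le_of_forall_sum_le {a u : ℕ → ℝ} {n j : ℕ} (ha : ∀ k, 0 < a k)
    (hform : ∀ c : ℕ → ℝ, ∑ k ∈ range n, c k * c (k + 1) * (a k ^ 2 + a (k + 1) ^ 2) ≤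
      2 * ∑ k ∈ range (n + 1), c k ^ 2 * a k ^ 2)
    (hu : ∀ k ≤ n, 0 ≤ u k) (hu0 : u 0 = 0) (hun : u n = 0) (hstep : ∀ k, |u (k + 1) - u k| ≤ 1)
    (hj : j < n) :
    u j * u (j + 1) * ((a j - a (j + 1)) ^ 2 / (a j * a (j + 1))) ≤ n := by
  set δ : ℕ → ℝ := fun k => u k * u (k + 1) * ((a k - a (k + 1)) ^ 2 / (a k * a (k + 1)))
  have hδ : ∀ k, u k / a k * (u (k + 1) / a (k + 1)) * (a k ^ 2 + a (k + 1) ^ 2) =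
      2 * (u k * u (k + 1)) + δ k := fun k => by
    have := (ha k).ne'; have := (ha (k + 1)).ne'
    simp only [δ]; field_simp; ring
  have hsq : ∀ k, (u k / a k) ^ 2 * a k ^ 2 = u k ^ 2 := fun k => by
    have := (ha k).ne'; field_simp
  have hsum := hform fun k => u k / a k
  simp only [hδ, hsq, sum_add_distrib, ← mul_sum] at hsum
  calc δ j ≤ ∑ k ∈ range n, δ k := by
        refine single_le_sum (fun k hk => ?_) (mem_range.mpr hj)
        rw [mem_range] at hk
        have := hu k hk.le; have := hu (k + 1) hk
        have := ha k; have := ha (k + 1)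
        positivity
    _ ≤ ∑ k ∈ range n, (u (k + 1) - u k) ^ 2 := by rw [sum_range_sub_sq, hu0, hun]; linarith
    _ ≤ ∑ k ∈ range n, 1 := sum_le_sum fun k _ => (sq_le_one_iff_abs_le_one _).mpr (hstep k)
    _ = n := by simp

theorem sq_mul_sq_sub_div_le_of_forall_sum_le {a : ℕ → ℝ} (ha : ∀ k, 0 < a k) (M : ℕ)
    (hform : ∀ c : ℕ → ℝ, ∑ k ∈ range (2 * M + 1), c k * c (k + 1) * (a k ^ 2 + a (k + 1) ^ 2) ≤
      2 * ∑ k ∈ range (2 * M + 1 + 1), c k ^ 2 * a k ^ 2) :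
    (M : ℝ) ^ 2 * ((a M - a (M + 1)) ^ 2 / (a M * a (M + 1))) ≤ 2 * M + 1 := by
  set u : ℕ → ℝ := fun k => min (k : ℝ) (2 * M + 1 - k)
  have hu : ∀ k ≤ 2 * M + 1, 0 ≤ u k := fun k hk => by
    have : (k : ℝ) ≤ 2 * M + 1 := by exact_mod_cast hk
    exact le_min (by positivity) (by linarith)
  have hu0 : u 0 = 0 := by
    simp only [u, Nat.cast_zero, sub_zero]; exact min_eq_left (by positivity)
  have hun : u (2 * M + 1) = 0 := by
    simp only [u]; push_cast; rw [sub_self]; exact min_eq_right (by positivity)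
  have hstep : ∀ k, |u (k + 1) - u k| ≤ 1 := fun k => by
    refine (abs_min_sub_min_le_max _ _ _ _).trans ?_
    push_cast
    rw [show (k : ℝ) + 1 - k = 1 by ring,
      show 2 * M + 1 - ((k : ℝ) + 1) - (2 * M + 1 - k) = -1 by ring]
    norm_num
  have huM : u M = M := min_eq_left (by linarith)
  have huM1 : u (M + 1) = M := by
    simp only [u]; push_cast; rw [min_eq_right (by linarith)]; ring
  have htent := mul_sq_sub_div_le_of_forall_sum_le ha hform hu hu0 hun hstep
    (show M < 2 * M + 1 by omega)
  rw [huM, huM1] at htent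
  push_cast at htent
  linarith

theorem nonpos_of_forall_sq_mul_le {ε : ℝ} (h : ∀ M : ℕ, (M : ℝ) ^ 2 * ε ≤ 2 * M + 1) :
    ε ≤ 0 := by
  by_contra! hε
  obtain ⟨M, hM⟩ := exists_nat_gt (3 / ε)
  rw [div_lt_iff₀ hε] at hM
  rcases Nat.eq_zero_or_pos M with rfl | hM0
  · norm_num at hM
  have hM1 : (1 : ℝ) ≤ M := by exact_mod_cast hM0
  nlinarith [h M]

section InnerProductSpace

variable {H : Type*} [NormedAddCommGroup H] [InnerProductSpace ℂ H]

/-- `w_ρ(T)` is the supremum of `rhoRadiusAt ρ T h` over unit vectors `h`. -/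
noncomputable def rhoRadiusAt (ρ : ℝ) (T : H →L[ℂ] H) (h : H) : ℝ :=
  (1 - 1 / ρ) * ‖⟪h, T h⟫_ℂ‖ + √((1 - 1 / ρ) ^ 2 * ‖⟪h, T h⟫_ℂ‖ ^ 2 + (2 / ρ - 1) * ‖T h‖ ^ 2)

theorem norm_inner_apply_self_le_rhoRadiusAt {ρ : ℝ} (hρ1 : 1 ≤ ρ) (hρ2 : ρ ≤ 2)
    (T : H →L[ℂ] H) {h : H} (hh : ‖h‖ ≤ 1) : ‖⟪h, T h⟫_ℂ‖ ≤ rhoRadiusAt ρ T h := by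
  set a := ‖⟪h, T h⟫_ℂ‖
  have ha : 0 ≤ a := norm_nonneg _
  have hat : a ≤ ‖T h‖ := (norm_inner_le_norm _ _).trans (mul_le_of_le_one_left (norm_nonneg _) hh)
  have hρ0 : 0 < ρ := by linarith
  have hγ : 0 ≤ 2 / ρ - 1 := by rw [sub_nonneg, le_div_iff₀ hρ0]; linarith
  have hsqrt : a / ρ ≤ √((1 - 1 / ρ) ^ 2 * a ^ 2 + (2 / ρ - 1) * ‖T h‖ ^ 2) := by
    refine Real.le_sqrt_of_sq_le ?_
    calc (a / ρ) ^ 2 = (1 - 1 / ρ) ^ 2 * a ^ 2 + (2 / ρ - 1) * a ^ 2 := by field_simp; ring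
      _ ≤ _ := by gcongr
  calc a = (1 - 1 / ρ) * a + a / ρ := by field_simp; ring
    _ ≤ _ := by unfold rhoRadiusAt; gcongr

theorem norm_inner_apply_self_le_sq {T : H →L[ℂ] H}
    (hT : ∀ h : H, ‖h‖ = 1 → ‖⟪h, T h⟫_ℂ‖ ≤ 1) (x : H) : ‖⟪x, T x⟫_ℂ‖ ≤ ‖x‖ ^ 2 := by
  rcases eq_or_ne x 0 with rfl | hx
  · simp
  have hunit := hT _ (norm_smul_inv_norm (𝕜 := ℂ) hx)
  rw [map_smul, inner_smul_left, inner_smul_right, norm_mul, norm_mul] at hunit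
  simp only [RCLike.norm_conj, norm_inv, RCLike.norm_ofReal, abs_norm] at hunit
  rwa [← mul_assoc, ← mul_inv, ← sq, inv_mul_le_iff₀ (by positivity), mul_one] at hunit

theorem sum_pow_mul_inner_sum_smul {ζ : ℂ} {N n d : ℕ} (hζ : IsPrimitiveRoot ζ N)
    (hN : n + d < N) (p q : ℕ → H) :
    ∑ m ∈ range N, ζ ^ (d * m) *
        ⟪∑ j ∈ range (n + 1), ζ ^ (j * m) • p j, ∑ k ∈ range (n + 1), ζ ^ (k * m) • q k⟫_ℂ =
      N * ∑ k ∈ range (n + 1 - d), ⟪p (k + d), q k⟫_ℂ := by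
  calc _ = ∑ j ∈ range (n + 1), ∑ k ∈ range (n + 1),
        ⟪p j, q k⟫_ℂ * ∑ m ∈ range N, ζ ^ ((k + d) * m) * conj (ζ ^ (j * m)) := by
        simp_rw [sum_inner, inner_sum, inner_smul_left, inner_smul_right, mul_sum]
        rw [sum_comm]
        refine sum_congr rfl fun j _ => ?_
        rw [sum_comm]
        refine sum_congr rfl fun k _ => sum_congr rfl fun m _ => ?_
        ring
    _ = ∑ k ∈ range (n + 1), ∑ j ∈ range (n + 1),
        if k + d = j then N * ⟪p j, q k⟫_ℂ else 0 := by
        rw [sum_comm]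
        refine sum_congr rfl fun k hk => sum_congr rfl fun j hj => ?_
        rw [mem_range] at hj hk
        rw [hζ.sum_pow_mul_conj_pow (by omega) (by omega)]
        split_ifs <;> ring
    _ = _ := by
        simp_rw [sum_ite_eq, mul_sum, ← sum_filter]
        congr 1
        ext k
        simp only [mem_filter, mem_range]
        omega

theorem sum_re_inner_succ_apply_le {T : H →L[ℂ] H} (hT : ∀ x, ‖⟪x, T x⟫_ℂ‖ ≤ ‖x‖ ^ 2)
    (p : ℕ → H) (n : ℕ) :
    ∑ k ∈ range n, (⟪p (k + 1), T (p k)⟫_ℂ).re ≤ ∑ k ∈ range (n + 1), ‖p k‖ ^ 2 := by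
  obtain ⟨ζ, hζ⟩ : ∃ ζ : ℂ, IsPrimitiveRoot ζ (n + 2) :=
    ⟨_, Complex.isPrimitiveRoot_exp _ (by omega)⟩
  set x : ℕ → H := fun m => ∑ k ∈ range (n + 1), ζ ^ (k * m) • p k
  have hTx : ∀ m, T (x m) = ∑ k ∈ range (n + 1), ζ ^ (k * m) • T (p k) := fun m => by
    simp only [x, map_sum, map_smul]
  have hshift : ∑ m ∈ range (n + 2), ζ ^ (1 * m) * ⟪x m, T (x m)⟫_ℂ =
      (n + 2 : ℕ) * ∑ k ∈ range n, ⟪p (k + 1), T (p k)⟫_ℂ := by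
    simp only [hTx]
    exact sum_pow_mul_inner_sum_smul hζ (by omega) p (fun k => T (p k))
  have hdiag : ∑ m ∈ range (n + 2), ζ ^ (0 * m) * ⟪x m, x m⟫_ℂ =
      (n + 2 : ℕ) * ∑ k ∈ range (n + 1), ⟪p k, p k⟫_ℂ :=
    sum_pow_mul_inner_sum_smul hζ (by omega) p p
  have hself : ∀ y : H, (⟪y, y⟫_ℂ).re = ‖y‖ ^ 2 := inner_self_eq_norm_sq (𝕜 := ℂ)
  have hterm : ∀ m, (ζ ^ (1 * m) * ⟪x m, T (x m)⟫_ℂ).re ≤ (ζ ^ (0 * m) * ⟪x m, x m⟫_ℂ).re :=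
    fun m => calc
      _ ≤ ‖ζ ^ (1 * m) * ⟪x m, T (x m)⟫_ℂ‖ := Complex.re_le_norm _
      _ ≤ ‖x m‖ ^ 2 := by
        rw [norm_mul, norm_pow, hζ.norm'_eq_one (by omega), one_pow, one_mul]
        exact hT _
      _ = _ := by rw [zero_mul, pow_zero, one_mul, hself]
  have hsum := sum_le_sum fun m (_ : m ∈ range (n + 2)) => hterm m
  rw [← Complex.re_sum, ← Complex.re_sum, hshift, hdiag] at hsum
  simp only [← Complex.ofReal_natCast, Complex.re_ofReal_mul, Complex.re_sum, hself] at hsum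
  exact le_of_mul_le_mul_left hsum (by positivity)

theorem sum_re_inner_apply_succ_le {T : H →L[ℂ] H} (hT : ∀ x, ‖⟪x, T x⟫_ℂ‖ ≤ ‖x‖ ^ 2)
    (p : ℕ → H) (n : ℕ) :
    ∑ k ∈ range n, (⟪p k, T (p (k + 1))⟫_ℂ).re ≤ ∑ k ∈ range (n + 1), ‖p k‖ ^ 2 := by
  have hrev := sum_re_inner_succ_apply_le hT (fun k => p (n - k)) n
  rw [← sum_range_reflect, ← sum_range_reflect _ (n + 1)]
  convert hrev using 2 with k hk k
  · rw [mem_range] at hk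
    rw [show n - 1 - k + 1 = n - k by omega, show n - 1 - k = n - (k + 1) by omega]
  · simp

theorem sum_mul_mul_add_sq_le {A B : H →L[ℂ] H} (hA : ∀ x, ‖⟪x, A x⟫_ℂ‖ ≤ ‖x‖ ^ 2)
    (hB : ∀ x, ‖⟪x, B x⟫_ℂ‖ ≤ ‖x‖ ^ 2) {v : ℕ → H} (hAv : ∀ k, A (v k) = v (k + 1))
    (hBv : ∀ k, B (v (k + 1)) = v k) (c : ℕ → ℝ) (n : ℕ) :
    ∑ k ∈ range n, c k * c (k + 1) * (‖v k‖ ^ 2 + ‖v (k + 1)‖ ^ 2) ≤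
      2 * ∑ k ∈ range (n + 1), c k ^ 2 * ‖v k‖ ^ 2 := by
  have hfwd := sum_re_inner_succ_apply_le hA (fun k => (c k : ℂ) • v k) n
  have hbwd := sum_re_inner_apply_succ_le hB (fun k => (c k : ℂ) • v k) n
  have hinner : ∀ (a b : ℝ) (x : H), (⟪(a : ℂ) • x, (b : ℂ) • x⟫_ℂ).re = a * b * ‖x‖ ^ 2 :=
    fun a b x => by
    rw [inner_smul_left, inner_smul_right, Complex.conj_ofReal, ← mul_assoc, ← Complex.ofReal_mul,
      Complex.re_ofReal_mul]
    exact congrArg _ (inner_self_eq_norm_sq (𝕜 := ℂ) x)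
  have hnorm : ∀ k, ‖(c k : ℂ) • v k‖ ^ 2 = c k ^ 2 * ‖v k‖ ^ 2 := fun k => by
    simp [norm_smul, mul_pow]
  simp only [map_smul, hAv, hBv, hinner, hnorm] at hfwd hbwd
  calc _ = ∑ k ∈ range n, c (k + 1) * c k * ‖v (k + 1)‖ ^ 2 +
        ∑ k ∈ range n, c k * c (k + 1) * ‖v k‖ ^ 2 := by
        rw [← sum_add_distrib]
        exact sum_congr rfl fun k _ => by ring
    _ ≤ _ := by linarith

theorem norm_apply_eq_of_mul_eq_one {A B : H →L[ℂ] H} (hAB : A * B = 1) (hBA : B * A = 1)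
    (hA : ∀ x, ‖⟪x, A x⟫_ℂ‖ ≤ ‖x‖ ^ 2) (hB : ∀ x, ‖⟪x, B x⟫_ℂ‖ ≤ ‖x‖ ^ 2) (h : H) :
    ‖A h‖ = ‖h‖ := by
  rcases eq_or_ne h 0 with rfl | hh
  · simp
  have hAh : 0 < ‖A h‖ := by
    refine norm_pos_iff.mpr fun h0 => hh ?_
    rw [← one_apply_eq_self (F := H →L[ℂ] H) h, ← hBA, mul_apply_eq_comp, h0, map_zero]
  suffices hM : ∀ M : ℕ, (M : ℝ) ^ 2 * ((‖h‖ - ‖A h‖) ^ 2 / (‖h‖ * ‖A h‖)) ≤ 2 * M + 1 by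
    have hzero := le_antisymm (nonpos_of_forall_sq_mul_le hM) (by positivity)
    rw [div_eq_zero_iff, or_iff_left (by positivity), sq_eq_zero_iff, sub_eq_zero] at hzero
    exact hzero.symm
  intro M
  set v : ℕ → H := fun k => (A ^ k) ((B ^ M) h)
  have hAv : ∀ k, A (v k) = v (k + 1) := fun k => by
    simp only [v, pow_succ', mul_apply_eq_comp]
  have hBv : ∀ k, B (v (k + 1)) = v k := fun k => by
    simp only [v, pow_succ', ← mul_apply_eq_comp, ← mul_assoc, hBA, one_mul]
  have hvM : v M = h := by
    simp only [v, ← mul_apply_eq_comp, pow_mul_pow_eq_one M hAB, one_apply_eq_self]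
  have hv : ∀ k, 0 < ‖v k‖ := fun k => by
    refine norm_pos_iff.mpr fun h0 => hh ?_
    have hBk : (B ^ k) (v k) = (B ^ M) h := by
      rw [← mul_apply_eq_comp, ← mul_apply_eq_comp, pow_mul_pow_eq_one k hBA, one_mul]
    rw [← hvM]
    show (A ^ M) ((B ^ M) h) = 0
    rw [← hBk, h0, map_zero, map_zero]
  have hbound := sq_mul_sq_sub_div_le_of_forall_sum_le hv M
    fun c => sum_mul_mul_add_sq_le hA hB hAv hBv c _
  rwa [← hAv, hvM] at hbound

end InnerProductSpace

/-- (Ando–Li) For `1 ≤ ρ ≤ 2`, if `A` is an invertible bounded operator on a complex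
Hilbert space with operator ρ-radius `w_ρ(A) ≤ 1` and `w_ρ(A⁻¹) ≤ 1`, then `A` is
unitary. -/
theorem unitary_of_rhoRadius_le_one
    {H : Type*} [NormedAddCommGroup H] [InnerProductSpace ℂ H] [CompleteSpace H]
    (ρ : ℝ) (hρ1 : 1 ≤ ρ) (hρ2 : ρ ≤ 2)
    (A B : H →L[ℂ] H) (hAB : A * B = 1) (hBA : B * A = 1)
    (hwA : ∀ h : H, ‖h‖ = 1 →
      (1 - 1 / ρ) * ‖(⟪h, A h⟫_ℂ)‖ +
        Real.sqrt ((1 - 1 / ρ) ^ 2 * ‖(⟪h, A h⟫_ℂ)‖ ^ 2 + (2 / ρ - 1) * ‖A h‖ ^ 2) ≤ 1)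
    (hwB : ∀ h : H, ‖h‖ = 1 →
      (1 - 1 / ρ) * ‖(⟪h, B h⟫_ℂ)‖ +
        Real.sqrt ((1 - 1 / ρ) ^ 2 * ‖(⟪h, B h⟫_ℂ)‖ ^ 2 + (2 / ρ - 1) * ‖B h‖ ^ 2) ≤ 1) :
    ContinuousLinearMap.adjoint A * A = 1 ∧ A * ContinuousLinearMap.adjoint A = 1 := by
  have hnr : ∀ T : H →L[ℂ] H, (∀ h : H, ‖h‖ = 1 → rhoRadiusAt ρ T h ≤ 1) →
      ∀ x, ‖⟪x, T x⟫_ℂ‖ ≤ ‖x‖ ^ 2 := fun T hT =>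
    norm_inner_apply_self_le_sq fun h hh =>
      (norm_inner_apply_self_le_rhoRadiusAt hρ1 hρ2 T hh.le).trans (hT h hh)
  have hAA : ContinuousLinearMap.adjoint A * A = 1 :=
    (ContinuousLinearMap.norm_map_iff_adjoint_comp_self A).mp
      (norm_apply_eq_of_mul_eq_one hAB hBA (hnr A hwA) (hnr B hwB))
  have hadj : ContinuousLinearMap.adjoint A = B := by
    rw [← one_mul B, ← hAA, mul_assoc, hAB, mul_one]
  exact ⟨hAA, hadj ▸ hAB⟩
end

section
/- Let H be a complex Hilbert space, let A be an invertible bounded linear operator on H, and set M = ½(A + (A*)⁻¹). Then M*M − I = ¼(A*A + (A*A)⁻¹ − 2I) is a positive (nonnegative self-adjoint) operator; in particular ‖Mu‖ ≥ ‖u‖ for every u ∈ H, so M is bounded below and ‖M⁻¹‖ ≤ 1 whenever M is invertible. -/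
/-!
With `b * a = 1`, put `m = ½(a + b*)` and `d = ½(a - b*)`. Expanding,
`m* m - d* d = ½(b a + (b a)*) = 1`, so `m* m - 1 = d* d` is positive. Evaluating the
quadratic form of `M* M - 1` at `u` gives `‖M u‖² - ‖u‖² ≥ 0`, and a right inverse of an
operator that does not shrink norms is a contraction.
-/

open scoped InnerProductSpace
open ContinuousLinearMap

section StarAlgebra

variable {𝕜 R : Type*} [Field 𝕜] [CharZero 𝕜] [StarRing 𝕜] [Ring R] [StarRing R]
  [Algebra 𝕜 R] [StarModule 𝕜 R] {a b m : R}

theorem star_mul_self_sub_one_eq_smul (hba : b * a = 1) (hm : m = (2 : 𝕜)⁻¹ • (a + star b)) :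
    star m * m - 1 = (4 : 𝕜)⁻¹ • (star a * a + b * star b - 2) := by
  have hab : star a * star b = 1 := by rw [← star_mul, hba, star_one]
  subst hm
  simp only [star_smul, star_add, star_star, star_inv₀, star_ofNat, smul_mul_smul_comm,
    add_mul, mul_add, hba, hab]
  rw [← one_add_one_eq_two (R := R)]
  module

theorem star_mul_self_sub_one_eq_star_mul_self (hba : b * a = 1)
    (hm : m = (2 : 𝕜)⁻¹ • (a + star b)) :
    star m * m - 1 = star ((2 : 𝕜)⁻¹ • (a - star b)) * ((2 : 𝕜)⁻¹ • (a - star b)) := by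
  have hab : star a * star b = 1 := by rw [← star_mul, hba, star_one]
  subst hm
  simp only [star_smul, star_add, star_sub, star_star, star_inv₀, star_ofNat,
    smul_mul_smul_comm, add_mul, mul_add, sub_mul, mul_sub, hba, hab]
  module

end StarAlgebra

namespace ContinuousLinearMap

theorem norm_le_norm_apply_of_isPositive_adjoint_mul_sub_one
    {𝕜 E : Type*} [RCLike 𝕜] [NormedAddCommGroup E] [InnerProductSpace 𝕜 E] [CompleteSpace E]
    {M : E →L[𝕜] E} (hM : (adjoint M * M - 1).IsPositive) (u : E) : ‖u‖ ≤ ‖M u‖ := by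
  have h := hM.re_inner_nonneg_left u
  rw [sub_apply, mul_apply_eq_comp, one_apply_eq_self, inner_sub_left, adjoint_inner_left,
    map_sub, inner_self_eq_norm_sq, inner_self_eq_norm_sq, sub_nonneg] at h
  exact (pow_le_pow_iff_left₀ (norm_nonneg _) (norm_nonneg _) two_ne_zero).mp h

theorem opNorm_le_one_of_mul_eq_one
    {𝕜 E : Type*} [NontriviallyNormedField 𝕜] [SeminormedAddCommGroup E] [NormedSpace 𝕜 E]
    {M N : E →L[𝕜] E} (hM : ∀ u, ‖u‖ ≤ ‖M u‖) (hMN : M * N = 1) : ‖N‖ ≤ 1 := by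
  refine opNorm_le_bound _ zero_le_one fun v => ?_
  have hv : M (N v) = v := by rw [← mul_apply_eq_comp, hMN, one_apply_eq_self]
  simpa [hv] using hM (N v)

end ContinuousLinearMap

theorem isPositive_adjoint_mul_sub_one_general
    {H : Type*} [NormedAddCommGroup H] [InnerProductSpace ℂ H] [CompleteSpace H]
    (A B : H →L[ℂ] H) (hBA : B * A = 1)
    (M : H →L[ℂ] H) (hM : M = (2 : ℂ)⁻¹ • (A + adjoint B)) :
    adjoint M * M - 1 = (4 : ℂ)⁻¹ • (adjoint A * A + B * adjoint B - 2) ∧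
    (adjoint M * M - 1).IsPositive ∧
    (∀ u : H, ‖u‖ ≤ ‖M u‖) ∧
    (∀ N : H →L[ℂ] H, M * N = 1 → N * M = 1 → ‖N‖ ≤ 1) := by
  simp only [← star_eq_adjoint] at hM ⊢
  have hpos : (star M * M - 1).IsPositive := by
    rw [star_mul_self_sub_one_eq_star_mul_self hBA hM, star_eq_adjoint]
    exact isPositive_adjoint_comp_self _
  have hbelow : ∀ u : H, ‖u‖ ≤ ‖M u‖ :=
    norm_le_norm_apply_of_isPositive_adjoint_mul_sub_one hpos
  exact ⟨star_mul_self_sub_one_eq_smul hBA hM, hpos, hbelow,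
    fun N hMN _ => opNorm_le_one_of_mul_eq_one hbelow hMN⟩

/-- For an invertible bounded operator `A` on a complex Hilbert space and
`M = ½(A + (A*)⁻¹)`, the operator `M*M − 1` equals `¼(A*A + (A*A)⁻¹ − 2)` and is
positive; in particular `‖Mu‖ ≥ ‖u‖` for all `u`, and any inverse of `M` is a
contraction. -/
theorem isPositive_adjoint_mul_sub_one
    {H : Type*} [NormedAddCommGroup H] [InnerProductSpace ℂ H] [CompleteSpace H]
    (A B : H →L[ℂ] H) (hAB : A * B = 1) (hBA : B * A = 1)
    (M : H →L[ℂ] H) (hM : M = (2 : ℂ)⁻¹ • (A + adjoint B)) :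
    adjoint M * M - 1 = (4 : ℂ)⁻¹ • (adjoint A * A + B * adjoint B - 2) ∧
    (adjoint M * M - 1).IsPositive ∧
    (∀ u : H, ‖u‖ ≤ ‖M u‖) ∧
    (∀ N : H →L[ℂ] H, M * N = 1 → N * M = 1 → ‖N‖ ≤ 1) :=
  isPositive_adjoint_mul_sub_one_general A B hBA M hM
end

section
/- Let H be a complex Hilbert space, let A be an invertible bounded linear operator on H, and set M = ½(A + (A*)⁻¹). Then A*A ≤ ((M*M)^{1/2} + (M*M − I)^{1/2})² in the sense of the order on self-adjoint operators, where C^{1/2} denotes the positive square root of a positive operator C (note M*M − I ≥ 0). -/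
/-!
Write `p = A*A` and `q = BB* = (AA*)⁻¹`, so that `pq = qp = 1`, and `m = M*M`. Expanding gives
`m = (p + q + 2)/4` and `m - 1 = N*N` with `N = ½(A - B*)`. The selfadjoint `x = (p - q)/2`
satisfies `p = 2m - 1 + x` and `x² = 4m(m - 1)`, because `pq + qp = 2`. Since `√m` and `√(m - 1)`
commute, `(√m + √(m - 1))² = 2m - 1 + 2√(m(m - 1)) = 2m - 1 + |x|`, and `x ≤ |x|`.
-/

open ContinuousLinearMap CFC

lemma ofNat_eq_smul_one {R S : Type*} [Semiring R] [Semiring S] [Module R S]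
    (n : ℕ) [n.AtLeastTwo] : (OfNat.ofNat n : S) = (OfNat.ofNat n : R) • (1 : S) := by
  rw [ofNat_smul_eq_nsmul, nsmul_one, Nat.cast_ofNat]

section CStarAlgebra

variable {A : Type*} [CStarAlgebra A]

lemma star_inv_two_smul_mul_inv_two_smul (u : A) :
    star ((2 : ℂ)⁻¹ • u) * ((2 : ℂ)⁻¹ • u) = (4 : ℂ)⁻¹ • (star u * u) := by
  rw [star_smul, smul_mul_smul_comm]
  norm_num

lemma star_add_star_mul_add_star {a b : A} (hba : b * a = 1) :
    star (a + star b) * (a + star b) = star a * a + b * star b + 2 := by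
  have hstar : star a * star b = 1 := by rw [← star_mul, hba, star_one]
  rw [star_add, star_star, add_mul, mul_add, mul_add, hstar, hba, ← one_add_one_eq_two]
  abel

lemma star_sub_star_mul_sub_star {a b : A} (hba : b * a = 1) :
    star (a - star b) * (a - star b) = star a * a + b * star b - 2 := by
  have hstar : star a * star b = 1 := by rw [← star_mul, hba, star_one]
  rw [star_sub, star_star, sub_mul, mul_sub, mul_sub, hstar, hba, ← one_add_one_eq_two]
  abel

lemma sub_mul_sub_eq_of_mul_eq_one {p q : A} (hpq : p * q = 1) (hqp : q * p = 1) :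
    (p - q) * (p - q) = (p + q + 2) * (p + q - 2) := by
  rw [← sub_eq_zero]
  calc _ = 2 * (2 - (p * q + q * p)) := by noncomm_ring
    _ = 0 := by rw [hpq, hqp, one_add_one_eq_two, sub_self, mul_zero]

variable [PartialOrder A] [StarOrderedRing A]

lemma CFC.commute_sqrt_sqrt {a b : A} (hab : Commute a b) : Commute (sqrt a) (sqrt b) := by
  rw [sqrt_eq_cfc, sqrt_eq_cfc]
  exact ((hab.cfc_nnreal _).symm.cfc_nnreal _).symm

lemma Commute.cfcSqrt_mul_cfcSqrt {a b : A} (hab : Commute a b) (ha : 0 ≤ a) (hb : 0 ≤ b) :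
    sqrt a * sqrt b = sqrt (a * b) := by
  have hcomm := commute_sqrt_sqrt hab
  refine (sqrt_unique ?_ (hcomm.mul_nonneg (sqrt_nonneg a) (sqrt_nonneg b))).symm
  rw [hcomm.symm.mul_mul_mul_comm, sqrt_mul_sqrt_self a, sqrt_mul_sqrt_self b]

lemma CFC.le_abs {a : A} (ha : IsSelfAdjoint a) : a ≤ abs a := by
  rw [← sub_nonneg, abs_sub_self a]
  exact smul_nonneg zero_le_two (negPart_nonneg a)

lemma CFC.sq_sqrt_add_sqrt_sub_one {a : A} (ha : 1 ≤ a) :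
    (sqrt a + sqrt (a - 1)) ^ 2 = 2 * a - 1 + 2 * sqrt (a * (a - 1)) := by
  have ha₀ : 0 ≤ a := zero_le_one.trans ha
  have ha₁ : 0 ≤ a - 1 := sub_nonneg.mpr ha
  have hcomm : Commute a (a - 1) := (Commute.refl a).sub_right (Commute.one_right a)
  rw [← hcomm.cfcSqrt_mul_cfcSqrt ha₀ ha₁, sq, add_mul, mul_add, mul_add,
    sqrt_mul_sqrt_self a, sqrt_mul_sqrt_self (a - 1), (commute_sqrt_sqrt hcomm).eq]
  noncomm_ring

lemma CFC.add_le_sq_sqrt_add_sqrt_sub_one {a x : A} (ha : 1 ≤ a) (hx : IsSelfAdjoint x)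
    (hxa : x * x = 4 * (a * (a - 1))) :
    2 * a - 1 + x ≤ (sqrt a + sqrt (a - 1)) ^ 2 := by
  have hprod : 0 ≤ a * (a - 1) :=
    ((Commute.refl a).sub_right (Commute.one_right a)).mul_nonneg
      (zero_le_one.trans ha) (sub_nonneg.mpr ha)
  have habs : abs x = 2 * sqrt (a * (a - 1)) := by
    refine sqrt_unique ?_ (by rw [two_mul]; exact add_nonneg (sqrt_nonneg _) (sqrt_nonneg _))
    calc 2 * sqrt (a * (a - 1)) * (2 * sqrt (a * (a - 1)))
        = 4 * (sqrt (a * (a - 1)) * sqrt (a * (a - 1))) := by noncomm_ring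
      _ = star x * x := by rw [sqrt_mul_sqrt_self _ hprod, hx.star_eq, hxa]
  rw [sq_sqrt_add_sqrt_sub_one ha, ← habs]
  exact add_le_add_right (le_abs hx) _

lemma CFC.le_sq_sqrt_add_sqrt_of_mul_eq_one {p q : A} (hp : IsSelfAdjoint p)
    (hq : IsSelfAdjoint q) (hpq : p * q = 1) (hqp : q * p = 1)
    (h1 : 1 ≤ (4 : ℂ)⁻¹ • (p + q + 2)) :
    p ≤ (sqrt ((4 : ℂ)⁻¹ • (p + q + 2)) + sqrt ((4 : ℂ)⁻¹ • (p + q + 2) - 1)) ^ 2 := by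
  have hsub : (4 : ℂ)⁻¹ • (p + q + 2) - 1 = (4 : ℂ)⁻¹ • (p + q - 2) := by
    rw [ofNat_eq_smul_one (R := ℂ) (S := A) 2]
    module
  have hx : IsSelfAdjoint ((2 : ℂ)⁻¹ • (p - q)) :=
    IsSelfAdjoint.smul (by simp [IsSelfAdjoint]) (hp.sub hq)
  convert add_le_sq_sqrt_add_sqrt_sub_one h1 hx ?_ using 1
  · rw [ofNat_eq_smul_one (R := ℂ) (S := A) 2, smul_mul_assoc, one_mul]
    module
  · rw [hsub, smul_mul_smul_comm, smul_mul_smul_comm, sub_mul_sub_eq_of_mul_eq_one hpq hqp,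
      ofNat_eq_smul_one (R := ℂ) (S := A) 4, smul_mul_assoc, one_mul, smul_smul]
    norm_num

theorem CStarAlgebra.star_mul_self_le_sq_sqrt_add_sqrt {a b M : A} (hab : a * b = 1)
    (hba : b * a = 1) (hM : M = (2 : ℂ)⁻¹ • (a + star b)) :
    0 ≤ star M * M - 1 ∧ star a * a ≤ (sqrt (star M * M) + sqrt (star M * M - 1)) ^ 2 := by
  have hm : star M * M = (4 : ℂ)⁻¹ • (star a * a + b * star b + 2) := by
    rw [hM, star_inv_two_smul_mul_inv_two_smul, star_add_star_mul_add_star hba]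
  have hm₁ : star M * M - 1 = star ((2 : ℂ)⁻¹ • (a - star b)) * ((2 : ℂ)⁻¹ • (a - star b)) := by
    rw [hm, star_inv_two_smul_mul_inv_two_smul, star_sub_star_mul_sub_star hba,
      ofNat_eq_smul_one (R := ℂ) (S := A) 2]
    module
  have hpq : star a * a * (b * star b) = 1 := by
    rw [mul_assoc, ← mul_assoc a, hab, one_mul, ← star_mul, hba, star_one]
  have hqp : b * star b * (star a * a) = 1 := by
    rw [mul_assoc, ← mul_assoc (star b), ← star_mul, hab, star_one, one_mul, hba]
  refine ⟨hm₁ ▸ star_mul_self_nonneg _, ?_⟩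
  rw [hm] at hm₁ ⊢
  exact le_sq_sqrt_add_sqrt_of_mul_eq_one (.star_mul_self a) (.mul_star_self b) hpq hqp
    (sub_nonneg.mp (hm₁ ▸ star_mul_self_nonneg _))

end CStarAlgebra

set_option synthInstance.maxHeartbeats 1000000 in
/-- For an invertible bounded operator `A` on a complex Hilbert space and
`M = ½(A + (A*)⁻¹)`, one has `A*A ≤ ((M*M)^{1/2} + (M*M − 1)^{1/2})²` in the Loewner
order, where the square roots are the positive square roots (note `M*M − 1 ≥ 0`). -/
theorem adjoint_mul_le_sq_sqrt_add_sqrt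
    {H : Type*} [NormedAddCommGroup H] [InnerProductSpace ℂ H] [CompleteSpace H]
    (A B : H →L[ℂ] H) (hAB : A * B = 1) (hBA : B * A = 1)
    (M : H →L[ℂ] H) (hM : M = (2 : ℂ)⁻¹ • (A + adjoint B)) :
    0 ≤ adjoint M * M - 1 ∧
    adjoint A * A ≤ (CFC.sqrt (adjoint M * M) + CFC.sqrt (adjoint M * M - 1)) ^ 2 := by
  simp only [← star_eq_adjoint] at hM ⊢
  exact CStarAlgebra.star_mul_self_le_sq_sqrt_add_sqrt hAB hBA hM
end

section
/- Let H be a complex Hilbert space, let A be an invertible bounded linear operator on H, and set M = ½(A + (A*)⁻¹). Then ‖M‖ ≥ 1 and ‖A‖ ≤ ‖M‖ + √(‖M‖² − 1). -/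
open scoped InnerProductSpace
open ContinuousLinearMap

/-!
If `B` is a left inverse of `A`, then `⟪(A + B*) x, A x⟫ = ‖A x‖² + ‖x‖²`, so Cauchy–Schwarz gives
`‖A x‖² + ‖x‖² ≤ 2‖M‖ ‖x‖ ‖A x‖` for every `x`. By AM–GM this forces `‖M‖ ≥ 1`, and solving the
quadratic inequality in `‖A x‖` gives `‖A x‖ ≤ (‖M‖ + √(‖M‖² − 1)) ‖x‖`.
-/

section Quadratic

variable {a t m : ℝ}

lemma one_le_of_sq_add_sq_le_two_mul (ha : 0 ≤ a) (ht : 0 < t)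
    (h : a ^ 2 + t ^ 2 ≤ 2 * m * t * a) : 1 ≤ m := by
  have ha' : 0 < a := by
    rcases ha.eq_or_lt with rfl | ha'
    · nlinarith
    · exact ha'
  nlinarith [sq_nonneg (a - t), mul_pos ht ha']

lemma le_add_sqrt_mul_of_sq_add_sq_le_two_mul (ht : 0 ≤ t) (hm : 1 ≤ m)
    (h : a ^ 2 + t ^ 2 ≤ 2 * m * t * a) : a ≤ (m + Real.sqrt (m ^ 2 - 1)) * t := by
  have hsq : (a - m * t) ^ 2 ≤ (m ^ 2 - 1) * t ^ 2 := by nlinarith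
  have habs : |a - m * t| ≤ Real.sqrt (m ^ 2 - 1) * t := by
    calc |a - m * t| ≤ Real.sqrt ((m ^ 2 - 1) * t ^ 2) := Real.abs_le_sqrt hsq
    _ = Real.sqrt (m ^ 2 - 1) * t := by
      rw [Real.sqrt_mul (by nlinarith), Real.sqrt_sq ht]
  nlinarith [le_abs_self (a - m * t)]

end Quadratic

lemma norm_sq_add_norm_sq_le_of_mul_eq_one {𝕜 E : Type*} [RCLike 𝕜] [NormedAddCommGroup E]
    [InnerProductSpace 𝕜 E] [CompleteSpace E] {A B : E →L[𝕜] E} (hBA : B * A = 1) (x : E) :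
    ‖A x‖ ^ 2 + ‖x‖ ^ 2 ≤ ‖A + adjoint B‖ * ‖x‖ * ‖A x‖ := by
  have hBAx : B (A x) = x := by simpa using congrArg (· x) hBA
  calc ‖A x‖ ^ 2 + ‖x‖ ^ 2 = RCLike.re ⟪(A + adjoint B) x, A x⟫_𝕜 := by
        rw [add_apply, inner_add_left, adjoint_inner_left, hBAx, map_add,
          inner_self_eq_norm_sq, inner_self_eq_norm_sq]
  _ ≤ ‖⟪(A + adjoint B) x, A x⟫_𝕜‖ := RCLike.re_le_norm _
  _ ≤ ‖(A + adjoint B) x‖ * ‖A x‖ := norm_inner_le_norm _ _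
  _ ≤ ‖A + adjoint B‖ * ‖x‖ * ‖A x‖ := by gcongr; exact le_opNorm _ _

theorem norm_le_norm_add_sqrt_general
    {H : Type*} [NormedAddCommGroup H] [InnerProductSpace ℂ H] [CompleteSpace H]
    [Nontrivial H]
    (A B : H →L[ℂ] H) (hBA : B * A = 1)
    (M : H →L[ℂ] H) (hM : M = (2 : ℂ)⁻¹ • (A + adjoint B)) :
    1 ≤ ‖M‖ ∧ ‖A‖ ≤ ‖M‖ + Real.sqrt (‖M‖ ^ 2 - 1) := by
  have hnorm : ‖A + adjoint B‖ = 2 * ‖M‖ := by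
    rw [hM, norm_smul, norm_inv, Complex.norm_ofNat]
    ring
  have key (x : H) : ‖A x‖ ^ 2 + ‖x‖ ^ 2 ≤ 2 * ‖M‖ * ‖x‖ * ‖A x‖ :=
    hnorm ▸ norm_sq_add_norm_sq_le_of_mul_eq_one hBA x
  obtain ⟨x, hx⟩ := exists_ne (0 : H)
  have hM1 : 1 ≤ ‖M‖ :=
    one_le_of_sq_add_sq_le_two_mul (norm_nonneg _) (norm_pos_iff.mpr hx) (key x)
  refine ⟨hM1, opNorm_le_bound _ (by positivity) fun y => ?_⟩
  exact le_add_sqrt_mul_of_sq_add_sq_le_two_mul (norm_nonneg y) hM1 (key y)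

/-- For an invertible bounded operator `A` on a nonzero complex Hilbert space and
`M = ½(A + (A*)⁻¹)`, one has `‖M‖ ≥ 1` and `‖A‖ ≤ ‖M‖ + √(‖M‖² − 1)`. -/
theorem norm_le_norm_add_sqrt
    {H : Type*} [NormedAddCommGroup H] [InnerProductSpace ℂ H] [CompleteSpace H]
    [Nontrivial H]
    (A B : H →L[ℂ] H) (hAB : A * B = 1) (hBA : B * A = 1)
    (M : H →L[ℂ] H) (hM : M = (2 : ℂ)⁻¹ • (A + adjoint B)) :
    1 ≤ ‖M‖ ∧ ‖A‖ ≤ ‖M‖ + Real.sqrt (‖M‖ ^ 2 - 1) :=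
  norm_le_norm_add_sqrt_general A B hBA M hM
end

section
/- Fix a natural number k and set n = 8k + 4. Let E be the n×n matrix (with indices 1 ≤ i, j ≤ n) whose entries are e_{ij} = 1 if 3k + 2 ≤ |i − j| ≤ 5k + 2 and e_{ij} = 0 otherwise. Then E·e = (n/4)·e, where e = (1, 1, …, 1)ᵀ, and the operator norm of E (induced by the Euclidean norm on ℂⁿ) equals n/4. -/
/-!
Since `(3k + 2) + (5k + 2) = n`, the condition `3k + 2 ≤ |i - j| ≤ 5k + 2` says that `(j - i) mod n`
lies in `[3k + 2, 5k + 2]`: `E` is a symmetric circulant 0-1 matrix with `2k + 1 = n / 4` ones in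
every row and column. Constant absolute row and column sums `r` bound the operator norm by `r`
(Schur test), and the all-ones eigenvector with eigenvalue `r` shows that the bound is attained.
-/

open Finset

theorem ContinuousLinearMap.norm_le_opNorm_of_apply_eq_smul {𝕜 E : Type*} [RCLike 𝕜]
    [NormedAddCommGroup E] [NormedSpace 𝕜 E] {T : E →L[𝕜] E} {v : E} {c : 𝕜} (hv : v ≠ 0)
    (h : T v = c • v) : ‖c‖ ≤ ‖T‖ :=
  le_of_mul_le_mul_right (by simpa [h, norm_smul] using T.le_opNorm v) (norm_pos_iff.mpr hv)

namespace Matrix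

variable {ι 𝕜 : Type*} [Fintype ι] [DecidableEq ι] [RCLike 𝕜]

/-- Schur test: Cauchy–Schwarz in each row, with the weights `‖A i j‖`. -/
theorem norm_toEuclideanCLM_le_of_sum_norm_le {A : Matrix ι ι 𝕜} {r : ℝ} (hr : 0 ≤ r)
    (hrow : ∀ i, ∑ j, ‖A i j‖ ≤ r) (hcol : ∀ j, ∑ i, ‖A i j‖ ≤ r) :
    ‖toEuclideanCLM (𝕜 := 𝕜) A‖ ≤ r := by
  refine ContinuousLinearMap.opNorm_le_bound _ hr fun x => ?_
  have hentry : ∀ i, ‖(A *ᵥ x) i‖ ^ 2 ≤ r * ∑ j, ‖A i j‖ * ‖x j‖ ^ 2 := fun i => calc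
    ‖(A *ᵥ x) i‖ ^ 2 ≤ (∑ j, ‖A i j‖ * ‖x j‖) ^ 2 := by
      gcongr
      simpa only [mulVec, dotProduct, norm_mul] using norm_sum_le univ fun j => A i j * x j
    _ ≤ (∑ j, ‖A i j‖) * ∑ j, ‖A i j‖ * ‖x j‖ ^ 2 :=
      sum_sq_le_sum_mul_sum_of_sq_le_mul _ (fun _ _ => norm_nonneg _)
        (fun _ _ => by positivity) fun _ _ => le_of_eq (by ring)
    _ ≤ r * ∑ j, ‖A i j‖ * ‖x j‖ ^ 2 := by gcongr; exact hrow i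
  refine le_of_sq_le_sq ?_ (by positivity)
  rw [mul_pow, EuclideanSpace.norm_sq_eq, EuclideanSpace.norm_sq_eq]
  calc ∑ i, ‖(A *ᵥ x) i‖ ^ 2 ≤ ∑ i, r * ∑ j, ‖A i j‖ * ‖x j‖ ^ 2 :=
        sum_le_sum fun i _ => hentry i
    _ = r * ∑ j, (∑ i, ‖A i j‖) * ‖x j‖ ^ 2 := by
      rw [← mul_sum, sum_comm]; simp_rw [sum_mul]
    _ ≤ r * ∑ j, r * ‖x j‖ ^ 2 := by gcongr with j; exact hcol j
    _ = r ^ 2 * ∑ j, ‖x j‖ ^ 2 := by rw [← mul_sum]; ring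

theorem norm_le_norm_toEuclideanCLM_of_mulVec_eq_smul {A : Matrix ι ι 𝕜} {v : ι → 𝕜} {c : 𝕜}
    (hv : v ≠ 0) (h : A *ᵥ v = c • v) : ‖c‖ ≤ ‖toEuclideanCLM (𝕜 := 𝕜) A‖ :=
  (toEuclideanCLM (𝕜 := 𝕜) A).norm_le_opNorm_of_apply_eq_smul (v := WithLp.toLp 2 v)
    (by simpa using hv) (by simp [h])

end Matrix

theorem Fin.card_filter_abs_sub_mem_Icc {n a b : ℕ} (ha : 0 < a) (hab : a ≤ b) (hn : a + b = n)
    (i : Fin n) :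
    #{j : Fin n | (a : ℤ) ≤ |(i : ℤ) - j| ∧ |(i : ℤ) - j| ≤ b} = b + 1 - a := by
  have : NeZero n := ⟨by omega⟩
  calc #{j : Fin n | (a : ℤ) ≤ |(i : ℤ) - j| ∧ |(i : ℤ) - j| ≤ b}
      = #{d : Fin n | a ≤ (d : ℕ) ∧ (d : ℕ) ≤ b} := by
        refine card_equiv (Equiv.subRight i) fun j => ?_
        simp only [mem_filter, mem_univ, true_and, Equiv.subRight_apply, le_abs, abs_le]
        rcases le_or_gt i j with hij | hij
        · rw [Fin.coe_sub_iff_le.mpr hij]; omega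
        · rw [Fin.coe_sub_iff_lt.mpr hij]; omega
    _ = #(Icc (⟨a, by omega⟩ : Fin n) ⟨b, by omega⟩) := by
        congr 1; ext d; simp [Fin.le_def]
    _ = b + 1 - a := Fin.card_Icc _ _

/-- For `n = 8k + 4` and the 0-1 matrix `E` with `e_{ij} = 1` iff `3k+2 ≤ |i−j| ≤ 5k+2`,
the all-ones vector is an eigenvector of `E` with eigenvalue `n/4`, and the operator
norm of `E` (induced by the Euclidean norm on `ℂⁿ`) equals `n/4`. -/
theorem matrix_E_norm (k : ℕ) (n : ℕ) (hn : n = 8 * k + 4)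
    (E : Matrix (Fin n) (Fin n) ℂ)
    (hE : ∀ i j : Fin n, E i j =
      if 3 * k + 2 ≤ |(i : ℤ) - (j : ℤ)| ∧ |(i : ℤ) - (j : ℤ)| ≤ 5 * k + 2 then 1 else 0) :
    E.mulVec (fun _ => 1) = (fun _ => (n : ℂ) / 4) ∧
    ‖Matrix.toEuclideanCLM (𝕜 := ℂ) E‖ = (n : ℝ) / 4 := by
  subst hn
  have hcard (i : Fin (8 * k + 4)) :
      #{j : Fin (8 * k + 4) | 3 * k + 2 ≤ |(i : ℤ) - j| ∧ |(i : ℤ) - j| ≤ 5 * k + 2} =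
        2 * k + 1 := by
    rw [show 2 * k + 1 = 5 * k + 2 + 1 - (3 * k + 2) by omega]
    exact_mod_cast Fin.card_filter_abs_sub_mem_Icc (by omega) (by omega) (by ring) i
  have hrow (i) : ∑ j, ‖E i j‖ = (2 * k + 1 : ℕ) := by simp [hE, apply_ite, hcard]
  have hcol (j) : ∑ i, ‖E i j‖ = (2 * k + 1 : ℕ) := by simpa [hE, abs_sub_comm] using hrow j
  have hmulVec : E.mulVec (fun _ => 1) = ((2 * k + 1 : ℕ) : ℂ) • fun _ => 1 := by
    ext i; simp [Matrix.mulVec, dotProduct, hE, hcard]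
  have hquarter : ((8 * k + 4 : ℕ) : ℝ) / 4 = (2 * k + 1 : ℕ) := by push_cast; ring
  refine ⟨?_, le_antisymm ?_ ?_⟩
  · rw [hmulVec]; ext; simp; ring
  · rw [hquarter]
    exact Matrix.norm_toEuclideanCLM_le_of_sum_norm_le (by positivity)
      (fun i => (hrow i).le) fun j => (hcol j).le
  · rw [hquarter, ← Complex.norm_natCast]
    exact Matrix.norm_le_norm_toEuclideanCLM_of_mulVec_eq_smul
      (fun h => one_ne_zero (congrFun h (⟨0, by omega⟩ : Fin (8 * k + 4)))) hmulVec
end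

section
/- Fix a natural number k and set n = 8k + 4. Let E be the n×n matrix with entries e_{ij} = 1 if 3k + 2 ≤ |i − j| ≤ 5k + 2 and e_{ij} = 0 otherwise, and let B = I + E/(2n^{3/2}). Then the operator norm of B (induced by the Euclidean norm on ℂⁿ) equals 1 + 1/(8√n). -/
/-!
Every row and column of `E` contains exactly `2k + 1 = n / 4` ones: in terms of `d = j - i mod n`
the band is `3k + 2 ≤ d ≤ 5k + 2`, an interval invariant under `d ↦ n - d`. Hence `B` has
nonnegative entries and all its row and column sums equal `1 + (n / 4) / (2 n^{3/2}) = 1 + 1/(8√n)`.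
The Schur test bounds `‖B‖` by this common sum, and the all-ones vector is an eigenvector with
exactly this eigenvalue.
-/

open Finset

theorem Real.inv_two_mul_rpow_three_halves_mul_div_four {x : ℝ} (hx : 0 ≤ x) :
    (2 * x ^ ((3 : ℝ) / 2))⁻¹ * (x / 4) = 1 / (8 * √x) := by
  rw [show (3 : ℝ) / 2 = 1 + 1 / 2 by norm_num, Real.rpow_add' hx (by norm_num), Real.rpow_one,
    ← Real.sqrt_eq_rpow]
  rcases hx.eq_or_lt with rfl | hx
  · simp
  have : 0 < √x := Real.sqrt_pos.mpr hx
  field_simp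
  norm_num

namespace Matrix

variable {ι 𝕜 : Type*} [Fintype ι] [DecidableEq ι] [RCLike 𝕜]

/-- The Schur test. -/
theorem norm_toEuclideanCLM_le_sqrt_mul (A : Matrix ι ι 𝕜) {r s : ℝ}
    (hrow : ∀ i, ∑ j, ‖A i j‖ ≤ r) (hcol : ∀ j, ∑ i, ‖A i j‖ ≤ s) :
    ‖toEuclideanCLM (𝕜 := 𝕜) A‖ ≤ √(r * s) := by
  rcases isEmpty_or_nonempty ι with hι | ⟨⟨i₀⟩⟩
  · simp [ContinuousLinearMap.opNorm_subsingleton]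
  have hr : 0 ≤ r := (sum_nonneg fun j _ => norm_nonneg _).trans (hrow i₀)
  refine ContinuousLinearMap.opNorm_le_bound _ (Real.sqrt_nonneg _) fun x => ?_
  set y := toEuclideanCLM (𝕜 := 𝕜) A x
  have hentry : ∀ i, ‖y i‖ ^ 2 ≤ r * ∑ j, ‖A i j‖ * ‖x j‖ ^ 2 := fun i =>
    calc ‖y i‖ ^ 2 ≤ (∑ j, ‖A i j‖ * ‖x j‖) ^ 2 := by
          gcongr
          exact (norm_sum_le _ _).trans_eq (sum_congr rfl fun j _ => norm_mul _ _)
      _ ≤ (∑ j, ‖A i j‖) * ∑ j, ‖A i j‖ * ‖x j‖ ^ 2 :=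
          sum_sq_le_sum_mul_sum_of_sq_le_mul _ (fun j _ => norm_nonneg _)
            (fun j _ => by positivity) (fun j _ => le_of_eq (by ring))
      _ ≤ r * ∑ j, ‖A i j‖ * ‖x j‖ ^ 2 := by gcongr; exact hrow i
  have hsq : ‖y‖ ^ 2 ≤ r * s * ‖x‖ ^ 2 :=
    calc ‖y‖ ^ 2 = ∑ i, ‖y i‖ ^ 2 := EuclideanSpace.norm_sq_eq _
      _ ≤ ∑ i, r * ∑ j, ‖A i j‖ * ‖x j‖ ^ 2 := sum_le_sum fun i _ => hentry i
      _ = r * ∑ j, (∑ i, ‖A i j‖) * ‖x j‖ ^ 2 := by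
          rw [← mul_sum, sum_comm]
          simp_rw [sum_mul]
      _ ≤ r * ∑ j, s * ‖x j‖ ^ 2 := by gcongr with j; exact hcol j
      _ = r * s * ‖x‖ ^ 2 := by rw [← mul_sum, EuclideanSpace.norm_sq_eq, mul_assoc]
  calc ‖y‖ = √(‖y‖ ^ 2) := (Real.sqrt_sq (norm_nonneg _)).symm
    _ ≤ √(r * s * ‖x‖ ^ 2) := Real.sqrt_le_sqrt hsq
    _ = √(r * s) * ‖x‖ := by rw [Real.sqrt_mul' _ (sq_nonneg _), Real.sqrt_sq (norm_nonneg _)]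

theorem norm_le_norm_toEuclideanCLM_of_sum_eq [Nonempty ι] (A : Matrix ι ι 𝕜) {c : 𝕜}
    (hrow : ∀ i, ∑ j, A i j = c) : ‖c‖ ≤ ‖toEuclideanCLM (𝕜 := 𝕜) A‖ := by
  set v : EuclideanSpace 𝕜 ι := WithLp.toLp 2 fun _ => 1
  have hAv : toEuclideanCLM (𝕜 := 𝕜) A v = c • v := by
    ext i
    simp [v, toEuclideanCLM_toLp, mulVec, dotProduct, hrow]
  have hv : 0 < ‖v‖ := by simp [v, EuclideanSpace.norm_eq, Fintype.card_pos]
  refine le_of_mul_le_mul_right ?_ hv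
  calc ‖c‖ * ‖v‖ = ‖toEuclideanCLM (𝕜 := 𝕜) A v‖ := by rw [hAv, norm_smul]
    _ ≤ ‖toEuclideanCLM (𝕜 := 𝕜) A‖ * ‖v‖ := ContinuousLinearMap.le_opNorm _ _

theorem norm_toEuclideanCLM_eq_of_sum_eq [Nonempty ι] (A : Matrix ι ι 𝕜) {c : 𝕜}
    (hrow : ∀ i, ∑ j, A i j = c) (hrow_norm : ∀ i, ∑ j, ‖A i j‖ ≤ ‖c‖)
    (hcol_norm : ∀ j, ∑ i, ‖A i j‖ ≤ ‖c‖) : ‖toEuclideanCLM (𝕜 := 𝕜) A‖ = ‖c‖ :=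
  le_antisymm
    ((norm_toEuclideanCLM_le_sqrt_mul A hrow_norm hcol_norm).trans_eq
      (Real.sqrt_mul_self (norm_nonneg c)))
    (norm_le_norm_toEuclideanCLM_of_sum_eq A hrow)

theorem norm_toEuclideanCLM_one_add_smul [Nonempty ι] (A : Matrix ι ι 𝕜) {t m : ℝ}
    (ht : 0 ≤ t) (hrow : ∀ i, ∑ j, A i j = m) (hrow_norm : ∀ i, ∑ j, ‖A i j‖ ≤ m)
    (hcol_norm : ∀ j, ∑ i, ‖A i j‖ ≤ m) :
    ‖toEuclideanCLM (𝕜 := 𝕜) (1 + (t : 𝕜) • A : Matrix ι ι 𝕜)‖ = 1 + t * m := by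
  have hm : 0 ≤ m :=
    (sum_nonneg fun j _ => norm_nonneg _).trans (hrow_norm (Classical.arbitrary ι))
  have hnorm : ‖((1 + t * m : ℝ) : 𝕜)‖ = 1 + t * m := by
    rw [RCLike.norm_ofReal, abs_of_nonneg (by positivity)]
  have hentry : ∀ i j, ‖(1 + (t : 𝕜) • A) i j‖ ≤ ‖(1 : Matrix ι ι 𝕜) i j‖ + t * ‖A i j‖ := by
    intro i j
    refine (norm_add_le _ _).trans_eq ?_
    rw [smul_apply, norm_smul, RCLike.norm_ofReal, abs_of_nonneg ht]
  rw [← hnorm]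
  refine norm_toEuclideanCLM_eq_of_sum_eq _ (fun i => ?_) (fun i => ?_) (fun j => ?_)
  · simp only [add_apply, smul_apply, smul_eq_mul, sum_add_distrib, ← mul_sum, hrow,
      one_apply, sum_ite_eq, mem_univ, if_true]
    push_cast
    rfl
  · rw [hnorm]
    refine (sum_le_sum fun j _ => hentry i j).trans ?_
    simp only [sum_add_distrib, ← mul_sum, one_apply, apply_ite, norm_one, norm_zero,
      sum_ite_eq, mem_univ, if_true]
    gcongr
    exact hrow_norm i
  · rw [hnorm]
    refine (sum_le_sum fun i _ => hentry i j).trans ?_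
    simp only [sum_add_distrib, ← mul_sum, one_apply, apply_ite, norm_one, norm_zero,
      sum_ite_eq', mem_univ, if_true]
    gcongr
    exact hcol_norm j

theorem norm_toEuclideanCLM_one_add_smul_indicator [Nonempty ι] (A : Matrix ι ι 𝕜)
    {P : ι → ι → Prop} [DecidableRel P] (hA : ∀ i j, A i j = if P i j then 1 else 0)
    (hP : ∀ i j, P i j ↔ P j i) {m : ℕ} (hcard : ∀ i, #{j | P i j} = m) {t : ℝ}
    (ht : 0 ≤ t) :
    ‖toEuclideanCLM (𝕜 := 𝕜) (1 + (t : 𝕜) • A : Matrix ι ι 𝕜)‖ = 1 + t * m := by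
  have hrow : ∀ i, ∑ j, A i j = m := fun i => by
    simp_rw [hA]
    rw [sum_boole, hcard]
  have hrow_norm : ∀ i, ∑ j, ‖A i j‖ = m := fun i => by
    simp only [hA, apply_ite, norm_one, norm_zero]
    rw [sum_boole, hcard]
  refine norm_toEuclideanCLM_one_add_smul A ht (fun i => ?_) (fun i => (hrow_norm i).le)
    (fun j => ?_)
  · rw [hrow, RCLike.ofReal_natCast]
  · simp_rw [hA, hP _ j, ← hA]
    exact (hrow_norm j).le

end Matrix

/-- For `n = 8k + 4`, the 0-1 matrix `E` with `e_{ij} = 1` iff `3k+2 ≤ |i−j| ≤ 5k+2`,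
and `B = I + E/(2n^{3/2})`, the operator norm of `B` (induced by the Euclidean norm on
`ℂⁿ`) equals `1 + 1/(8√n)`. -/
theorem matrix_B_norm (k : ℕ) (n : ℕ) (hn : n = 8 * k + 4)
    (E : Matrix (Fin n) (Fin n) ℂ)
    (hE : ∀ i j : Fin n, E i j =
      if 3 * k + 2 ≤ |(i : ℤ) - (j : ℤ)| ∧ |(i : ℤ) - (j : ℤ)| ≤ 5 * k + 2 then 1 else 0)
    (B : Matrix (Fin n) (Fin n) ℂ)
    (hB : B = 1 + (((2 * (n : ℝ) ^ ((3 : ℝ) / 2))⁻¹ : ℝ) : ℂ) • E) :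
    ‖Matrix.toEuclideanCLM (𝕜 := ℂ) B‖ = 1 + 1 / (8 * Real.sqrt n) := by
  have : NeZero n := ⟨by omega⟩
  have hband_symm : ∀ i j : Fin n,
      (3 * (k : ℤ) + 2 ≤ |(i : ℤ) - j| ∧ |(i : ℤ) - j| ≤ 5 * k + 2) ↔
        (3 * (k : ℤ) + 2 ≤ |(j : ℤ) - i| ∧ |(j : ℤ) - i| ≤ 5 * k + 2) := fun i j => by
    rw [abs_sub_comm]
  have hband_card : ∀ i : Fin n,
      #{j : Fin n | 3 * (k : ℤ) + 2 ≤ |(i : ℤ) - j| ∧ |(i : ℤ) - j| ≤ 5 * k + 2} = 2 * k + 1 := by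
    intro i
    have := Fin.card_filter_abs_sub_mem_Icc (a := 3 * k + 2) (b := 5 * k + 2) (by omega)
      (by omega) (by omega) i
    push_cast at this
    rw [this]
    omega
  have hquarter : ((2 * k + 1 : ℕ) : ℝ) = n / 4 := by rw [hn]; push_cast; ring
  rw [hB, ← Real.inv_two_mul_rpow_three_halves_mul_div_four n.cast_nonneg, ← hquarter]
  exact Matrix.norm_toEuclideanCLM_one_add_smul_indicator E
    (t := (2 * (n : ℝ) ^ ((3 : ℝ) / 2))⁻¹) hE hband_symm hband_card (by positivity)
end

section
/- Fix a natural number k and set n = 8k + 4. Let E be the n×n matrix with entries e_{ij} = 1 if 3k + 2 ≤ |i − j| ≤ 5k + 2 and e_{ij} = 0 otherwise, B = I + E/(2n^{3/2}), D = diag(e^{iπ/2n}, e^{3iπ/2n}, …, e^{(2n−1)iπ/2n}), and A = DBD. Let P be the n×n permutation matrix with p_{ij} = 1 if i ≡ j + 1 (mod n) and p_{ij} = 0 otherwise, and let Δ = diag(1, …, 1, −1). Then PΔ is unitary and (PΔ)⁻¹ A (PΔ) = e^{2iπ/n} A. -/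
/-!
Conjugation by the cyclic shift `P` reindexes a matrix by `i ↦ i + 1`. The band matrix `E` is
invariant under this reindexing, because the band `3k + 2 ≤ |i - j| ≤ 5k + 2` is symmetric under
`|i - j| ↦ n - |i - j|`, and hence so is `B`. The phases of `D` are multiplied by `e^{iπ/n}`,
except that wrapping around from index `n - 1` to `0` costs an extra `e^{iπ} = -1`, which `Δ`
cancels. Hence `(PΔ)⁻¹ D B D (PΔ) = (e^{iπ/n} D) B (e^{iπ/n} D) = e^{2iπ/n} A`.
-/

open Real Matrix

namespace Fin

variable {n : ℕ} [NeZero n]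

lemma val_add_one_eq_ite (i : Fin n) :
    ((i + 1 : Fin n) : ℕ) = if (i : ℕ) = n - 1 then 0 else (i : ℕ) + 1 := by
  have := i.isLt
  rw [Fin.val_add, Fin.val_one', Nat.add_mod_mod]
  split_ifs with h
  · rw [show (i : ℕ) + 1 = n by omega, Nat.mod_self]
  · exact Nat.mod_eq_of_lt (by omega)

lemma natCast_eq_natCast_add_one_iff (i j : Fin n) :
    ((i : ℕ) : ZMod n) = ((j : ℕ) : ZMod n) + 1 ↔ i = j + 1 := by
  rw [← Nat.cast_succ, ZMod.natCast_eq_natCast_iff', Nat.mod_eq_of_lt i.isLt, Fin.ext_iff,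
    Fin.val_add, Fin.val_one', Nat.add_mod_mod]

lemma abs_sub_add_one_eq_or (i j : Fin n) :
    |((i + 1 : Fin n) : ℤ) - ((j + 1 : Fin n) : ℤ)| = |(i : ℤ) - j| ∨
      |((i + 1 : Fin n) : ℤ) - ((j + 1 : Fin n) : ℤ)| = n - |(i : ℤ) - j| := by
  have := i.isLt; have := j.isLt
  rw [val_add_one_eq_ite, val_add_one_eq_ite]
  split_ifs <;> simp only [abs_eq_max_neg] <;> push_cast <;> omega

end Fin

namespace Matrix

variable {ι R : Type*} [DecidableEq ι]

lemma conjTranspose_diagonal_ite_neg_one_one [Ring R] [StarRing R] (p : ι → Prop)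
    [DecidablePred p] :
    (diagonal fun i => if p i then (-1 : R) else 1)ᴴ =
      diagonal fun i => if p i then -1 else 1 := by
  rw [diagonal_conjTranspose]
  congr 1; ext i; by_cases h : p i <;> simp [h]

variable [Fintype ι]

lemma diagonal_ite_neg_one_one_mul_self [Ring R] (p : ι → Prop) [DecidablePred p] :
    diagonal (fun i => if p i then (-1 : R) else 1) * diagonal (fun i => if p i then -1 else 1)
      = 1 := by
  rw [diagonal_mul_diagonal, ← diagonal_one]
  congr 1; ext i; split_ifs <;> simp

lemma conjTranspose_permMatrix_mul_mul_permMatrix [Semiring R] [StarRing R] (σ : Equiv.Perm ι)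
    (M : Matrix ι ι R) : (σ.permMatrix R)ᴴ * M * σ.permMatrix R = M.reindex σ σ := by
  rw [conjTranspose_permMatrix, PEquiv.toMatrix_toPEquiv_mul, PEquiv.mul_toMatrix_toPEquiv]
  rfl

lemma conjTranspose_permMatrix_mul_self [Semiring R] [StarRing R] (σ : Equiv.Perm ι) :
    (σ.permMatrix R)ᴴ * σ.permMatrix R = 1 := by
  simpa using conjTranspose_permMatrix_mul_mul_permMatrix σ (1 : Matrix ι ι R)

lemma conjTranspose_mul_self_permMatrix_mul_diagonal_ite [Ring R] [StarRing R]
    (σ : Equiv.Perm ι) (p : ι → Prop) [DecidablePred p] :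
    (σ.permMatrix R * diagonal fun i => if p i then -1 else 1)ᴴ *
      (σ.permMatrix R * diagonal fun i => if p i then -1 else 1) = 1 := by
  rw [conjTranspose_mul, Matrix.mul_assoc, ← Matrix.mul_assoc (σ.permMatrix R)ᴴ,
    conjTranspose_permMatrix_mul_self, Matrix.one_mul, conjTranspose_diagonal_ite_neg_one_one,
    diagonal_ite_neg_one_one_mul_self]

end Matrix

section CyclicShift

variable {n : ℕ} [NeZero n]

lemma Matrix.permMatrix_inv_addRight_one_apply {R : Type*} [Zero R] [One R] (i j : Fin n) :
    (Equiv.addRight (1 : Fin n))⁻¹.permMatrix R i j = if i = j + 1 then 1 else 0 := by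
  simp [PEquiv.toMatrix_apply, add_neg_eq_iff_eq_add]

lemma Matrix.reindex_inv_addRight_one_eq_self_of_eq_abs_sub {R : Type*} (f : ℤ → R)
    (hf : ∀ x, f (n - x) = f x) (M : Matrix (Fin n) (Fin n) R)
    (hM : ∀ i j, M i j = f |(i : ℤ) - j|) :
    M.reindex (Equiv.addRight 1)⁻¹ (Equiv.addRight 1)⁻¹ = M := by
  ext i j
  rw [reindex_apply, submatrix_apply, Equiv.Perm.inv_def, Equiv.symm_symm, Equiv.coe_addRight,
    hM, hM]
  rcases Fin.abs_sub_add_one_eq_or i j with h | h <;> rw [h]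
  exact hf _

end CyclicShift

/-- `oddPhase n x = e^{(2x + 1)iπ/2n}`, written so that `D = diagonal (oddPhase n ·)` holds by
definition. -/
noncomputable def oddPhase (n : ℕ) (x : ℂ) : ℂ :=
  Complex.exp ((2 * (x + 1) - 1) * π * Complex.I / (2 * n))

section OddPhase

variable {n : ℕ} [NeZero n]

lemma oddPhase_add_one (x : ℂ) :
    oddPhase n (x + 1) = Complex.exp (π * Complex.I / n) * oddPhase n x := by
  have : (n : ℂ) ≠ 0 := NeZero.ne _
  rw [oddPhase, oddPhase, ← Complex.exp_add]
  congr 1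
  field_simp
  ring

lemma oddPhase_zero :
    oddPhase n 0 = -(Complex.exp (π * Complex.I / n) * oddPhase n (n - 1)) := by
  have : (n : ℂ) ≠ 0 := NeZero.ne _
  rw [oddPhase, oddPhase, ← Complex.exp_add,
    show π * Complex.I / n + (2 * (n - 1 + 1) - 1) * π * Complex.I / (2 * n) =
      (2 * (0 + 1) - 1) * π * Complex.I / (2 * n) + π * Complex.I by field_simp; ring,
    Complex.exp_add, Complex.exp_pi_mul_I]
  ring

lemma ite_mul_oddPhase_val_add_one (i : Fin n) :
    (if (i : ℕ) = n - 1 then -1 else 1) * oddPhase n ((i + 1 : Fin n) : ℕ) =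
      Complex.exp (π * Complex.I / n) * oddPhase n (i : ℕ) := by
  rw [Fin.val_add_one_eq_ite]
  split_ifs with h
  · rw [Nat.cast_zero, oddPhase_zero, h, Nat.cast_pred (Nat.pos_of_neZero n)]
    ring
  · rw [one_mul, Nat.cast_succ, oddPhase_add_one]

lemma diagonal_ite_mul_reindex_diagonal_oddPhase :
    (diagonal fun i : Fin n => if (i : ℕ) = n - 1 then (-1 : ℂ) else 1) *
        (diagonal fun ℓ : Fin n => oddPhase n ℓ).reindex
          (Equiv.addRight 1)⁻¹ (Equiv.addRight 1)⁻¹ =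
      Complex.exp (π * Complex.I / n) • diagonal fun ℓ : Fin n => oddPhase n ℓ := by
  rw [reindex_apply, Equiv.Perm.inv_def, Equiv.symm_symm, submatrix_diagonal_equiv,
    diagonal_mul_diagonal, ← diagonal_smul]
  congr 1
  ext i
  exact ite_mul_oddPhase_val_add_one i

end OddPhase

/-- For `n = 8k + 4` and `A = DBD` as in the paper, with `P` the cyclic permutation
matrix (`p_{ij} = 1` iff `i ≡ j + 1 (mod n)`) and `Δ = diag(1, …, 1, −1)`, the matrix
`PΔ` is unitary and `(PΔ)⁻¹ A (PΔ) = e^{2iπ/n} A`. -/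
theorem matrix_A_rotation_symmetry (k : ℕ) (n : ℕ) (hn : n = 8 * k + 4)
    (E : Matrix (Fin n) (Fin n) ℂ)
    (hE : ∀ i j : Fin n, E i j =
      if 3 * k + 2 ≤ |(i : ℤ) - (j : ℤ)| ∧ |(i : ℤ) - (j : ℤ)| ≤ 5 * k + 2 then 1 else 0)
    (B : Matrix (Fin n) (Fin n) ℂ)
    (hB : B = 1 + (((2 * (n : ℝ) ^ ((3 : ℝ) / 2))⁻¹ : ℝ) : ℂ) • E)
    (D : Matrix (Fin n) (Fin n) ℂ)
    (hD : D = Matrix.diagonal fun ℓ : Fin n =>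
      Complex.exp ((2 * ((ℓ : ℕ) + 1) - 1) * π * Complex.I / (2 * n)))
    (A : Matrix (Fin n) (Fin n) ℂ) (hA : A = D * B * D)
    (P : Matrix (Fin n) (Fin n) ℂ)
    (hP : ∀ i j : Fin n, P i j = if ((i : ℕ) : ZMod n) = ((j : ℕ) : ZMod n) + 1 then 1 else 0)
    (Δ : Matrix (Fin n) (Fin n) ℂ)
    (hΔ : Δ = Matrix.diagonal fun i : Fin n => if (i : ℕ) = n - 1 then (-1 : ℂ) else 1) :
    (P * Δ)ᴴ * (P * Δ) = 1 ∧ (P * Δ) * (P * Δ)ᴴ = 1 ∧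
    (P * Δ)⁻¹ * A * (P * Δ) = Complex.exp (2 * π * Complex.I / n) • A := by
  have : NeZero n := ⟨by omega⟩
  set σ : Equiv.Perm (Fin n) := (Equiv.addRight 1)⁻¹
  set ρ := reindexAlgEquiv ℂ ℂ σ
  have hP' : P = σ.permMatrix ℂ := by
    ext i j
    rw [hP, permMatrix_inv_addRight_one_apply]
    exact if_congr (Fin.natCast_eq_natCast_add_one_iff i j) rfl rfl
  have hunitary : (P * Δ)ᴴ * (P * Δ) = 1 := by
    rw [hP', hΔ]; exact conjTranspose_mul_self_permMatrix_mul_diagonal_ite σ _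
  refine ⟨hunitary, mul_eq_one_comm.mp hunitary, ?_⟩
  have hE_shift : ρ E = E :=
    reindex_inv_addRight_one_eq_self_of_eq_abs_sub
      (fun x => if 3 * k + 2 ≤ x ∧ x ≤ 5 * k + 2 then 1 else 0)
      (fun x => if_congr (by push_cast [hn]; omega) rfl rfl) E hE
  have hB_shift : ρ B = B := by rw [hB, map_add, map_one, map_smul, hE_shift]
  have hΔD : Δ * ρ D = Complex.exp (π * Complex.I / n) • D := by
    rw [hΔ, hD]; exact diagonal_ite_mul_reindex_diagonal_oddPhase
  have hDΔ : ρ D * Δ = Complex.exp (π * Complex.I / n) • D := by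
    rw [← hΔD, hΔ, hD, coe_reindexAlgEquiv, reindex_apply, submatrix_diagonal_equiv]
    exact (commute_diagonal _ _).eq
  rw [inv_eq_left_inv hunitary]
  calc (P * Δ)ᴴ * A * (P * Δ) = Δ * (Pᴴ * A * P) * Δ := by
        rw [conjTranspose_mul, hΔ, conjTranspose_diagonal_ite_neg_one_one, ← hΔ]
        simp only [Matrix.mul_assoc]
    _ = Δ * ρ A * Δ := by rw [hP', conjTranspose_permMatrix_mul_mul_permMatrix]; rfl
    _ = (Δ * ρ D) * B * (ρ D * Δ) := by
        rw [hA, map_mul, map_mul, hB_shift]; simp only [Matrix.mul_assoc]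
    _ = Complex.exp (2 * π * Complex.I / n) • A := by
        rw [hΔD, hDΔ, Matrix.smul_mul, Matrix.smul_mul, Matrix.mul_smul, smul_smul,
          ← Complex.exp_add, hA]
        ring_nf
end

section
/- Let n ≥ 3 be a natural number and let z be a complex number such that Re(e^{2iπk/n} z) ≤ 1 for every integer k with 1 ≤ k ≤ n. Then |z| ≤ 1/cos(π/n). Consequently, if A is a bounded linear operator on a complex Hilbert space whose numerical range W(A) = {⟨Ah,h⟩ : ‖h‖ = 1} satisfies e^{2iπ/n}·W(A) = W(A) and Re⟨Ah,h⟩ ≤ 1 for all unit vectors h, then w(A) ≤ 1/cos(π/n). -/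
open Real
open scoped InnerProductSpace

universe u

/-! Writing `z = ‖z‖ e^{iθ}`, the real part of `e^{2iπk/n} z` is `‖z‖ cos(θ + 2πk/n)`.
Rounding `-nθ/(2π)` gives some `k` with `|θ + 2πk/n| ≤ π/n`, hence `‖z‖ cos(π/n) ≤ 1`.
For the operator statement, invariance of `W(A)` under rotation by `e^{2iπ/n}` puts every
`e^{2iπk/n}⟨Ah,h⟩` back into `W(A)`, where the real part is at most `1`. -/

theorem Complex.re_exp_ofReal_mul_I_mul (a : ℝ) (z : ℂ) :
    (Complex.exp (a * Complex.I) * z).re = ‖z‖ * Real.cos (Complex.arg z + a) := by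
  conv_lhs => rw [← Complex.norm_mul_exp_arg_mul_I z]
  rw [mul_left_comm, ← Complex.exp_add, ← add_mul, ← Complex.ofReal_add,
    Complex.re_ofReal_mul, Complex.exp_ofReal_mul_I_re, add_comm a]

theorem exists_int_abs_add_two_pi_mul_div_le {n : ℕ} (hn : 0 < n) (θ : ℝ) :
    ∃ k : ℤ, |θ + 2 * π * k / n| ≤ π / n := by
  have hn' : (0 : ℝ) < n := by exact_mod_cast hn
  set t : ℝ := -(n * θ) / (2 * π)
  refine ⟨round t, ?_⟩
  have hangle : θ + 2 * π * round t / n = 2 * π / n * (round t - t) := by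
    simp only [t]; field_simp; ring
  rw [hangle, abs_mul, abs_of_pos (by positivity), abs_sub_comm]
  calc 2 * π / n * |t - round t| ≤ 2 * π / n * (1 / 2) := by
        gcongr; exact abs_sub_round t
    _ = π / n := by ring

theorem exists_cos_pi_div_le_cos_add_two_pi_mul_div {n : ℕ} (hn : 0 < n) (θ : ℝ) :
    ∃ k : ℕ, 1 ≤ k ∧ k ≤ n ∧ Real.cos (π / n) ≤ Real.cos (θ + 2 * π * k / n) := by
  obtain ⟨k₀, hk₀⟩ := exists_int_abs_add_two_pi_mul_div_le hn θ
  -- `j + 1` is the representative of `k₀` modulo `n` in `[1, n]`.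
  obtain ⟨j, hj⟩ : ∃ j : ℕ, (k₀ - 1) % n = j :=
    Int.eq_ofNat_of_zero_le (Int.emod_nonneg _ (Int.natCast_pos.mpr hn).ne')
  have hjn : (j : ℤ) < n := hj ▸ Int.emod_lt_of_pos _ (Int.natCast_pos.mpr hn)
  set q : ℤ := (k₀ - 1) / n
  have hk₀_eq : (k₀ : ℝ) = (j + 1 : ℕ) + n * q := by
    have := Int.emod_add_mul_ediv (k₀ - 1) n
    rw [hj] at this
    exact_mod_cast (by push_cast; linarith : k₀ = ((j + 1 : ℕ) : ℤ) + n * q)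
  have hperiod : θ + 2 * π * k₀ / n = θ + 2 * π * (j + 1 : ℕ) / n + q * (2 * π) := by
    rw [hk₀_eq]; field_simp; ring
  refine ⟨j + 1, by omega, by omega, ?_⟩
  rw [← Real.cos_add_int_mul_two_pi (θ + _) q, ← hperiod, ← Real.cos_abs (θ + _)]
  exact Real.cos_le_cos_of_nonneg_of_le_pi (abs_nonneg _)
    (div_le_self Real.pi_pos.le (by exact_mod_cast hn)) hk₀

theorem norm_mul_cos_pi_div_le_one {n : ℕ} (hn : 0 < n) {z : ℂ}
    (hz : ∀ k : ℕ, 1 ≤ k → k ≤ n →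
      (Complex.exp (2 * π * Complex.I * k / n) * z).re ≤ 1) :
    ‖z‖ * Real.cos (π / n) ≤ 1 := by
  obtain ⟨k, hk₁, hkn, hcos⟩ := exists_cos_pi_div_le_cos_add_two_pi_mul_div hn (Complex.arg z)
  have hexp : (2 * π * Complex.I * k / n : ℂ) = ((2 * π * k / n : ℝ) : ℂ) * Complex.I := by
    push_cast; ring
  have hre := hz k hk₁ hkn
  rw [hexp, Complex.re_exp_ofReal_mul_I_mul] at hre
  exact (mul_le_mul_of_nonneg_left hcos (norm_nonneg z)).trans hre

theorem Real.cos_pi_div_pos {n : ℕ} (hn : 3 ≤ n) : 0 < Real.cos (π / n) := by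
  have hn' : (2 : ℝ) < n := by exact_mod_cast hn
  refine Real.cos_pos_of_mem_Ioo ⟨?_, div_lt_div_of_pos_left Real.pi_pos two_pos hn'⟩
  linarith [div_pos Real.pi_pos (two_pos.trans hn'), Real.pi_div_two_pos]

theorem Set.pow_mul_mem_of_image_mul_left_subset {M : Type*} [Monoid M] {S : Set M} {c : M}
    (hS : (c * ·) '' S ⊆ S) (k : ℕ) {z : M} (hz : z ∈ S) : c ^ k * z ∈ S := by
  rw [← mul_left_iterate_apply]
  exact (Set.mapsTo_iff_image_subset.mpr hS).iterate k hz

/-- If `n ≥ 3` and `Re(e^{2iπk/n} z) ≤ 1` for `k = 1, …, n`, then `|z| ≤ 1/cos(π/n)`.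
Consequently, an operator whose numerical range is invariant under rotation by `2π/n`
and lies in the half-plane `{Re z ≤ 1}` has numerical radius at most `1/cos(π/n)`. -/
theorem abs_le_inv_cos_of_rotations_re_le_one (n : ℕ) (hn : 3 ≤ n) :
    (∀ z : ℂ, (∀ k : ℕ, 1 ≤ k → k ≤ n →
        (Complex.exp (2 * π * Complex.I * k / n) * z).re ≤ 1) →
      ‖z‖ ≤ 1 / Real.cos (π / n)) ∧
    (∀ (H : Type u) [NormedAddCommGroup H] [InnerProductSpace ℂ H] (A : H →L[ℂ] H),
      (fun z => Complex.exp (2 * π * Complex.I / n) * z) ''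
          {z : ℂ | ∃ h : H, ‖h‖ = 1 ∧ z = ⟪h, A h⟫_ℂ} =
        {z : ℂ | ∃ h : H, ‖h‖ = 1 ∧ z = ⟪h, A h⟫_ℂ} →
      (∀ h : H, ‖h‖ = 1 → (⟪h, A h⟫_ℂ).re ≤ 1) →
      ∀ h : H, ‖h‖ = 1 → ‖(⟪h, A h⟫_ℂ)‖ ≤ 1 / Real.cos (π / n)) := by
  have hbound : ∀ z : ℂ, (∀ k : ℕ, 1 ≤ k → k ≤ n →
      (Complex.exp (2 * π * Complex.I * k / n) * z).re ≤ 1) →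
      ‖z‖ ≤ 1 / Real.cos (π / n) :=
    fun z hz => (le_div_iff₀ (Real.cos_pi_div_pos hn)).mpr
      (norm_mul_cos_pi_div_le_one (by omega) hz)
  refine ⟨hbound, fun H _ _ A hrot hre h hh => hbound _ fun k _ _ => ?_⟩
  obtain ⟨h', hh', heq⟩ :=
    Set.pow_mul_mem_of_image_mul_left_subset hrot.subset k ⟨h, hh, rfl⟩
  rw [show (2 * π * Complex.I * k / n : ℂ) = k * (2 * π * Complex.I / n) by ring,
    Complex.exp_nat_mul, heq]
  exact hre h' hh'
end

section
/- Fix a natural number k and set n = 8k + 4. Let M be the n×n real matrix (indices 1 ≤ i, j ≤ n) with entries m_{ij} = (1/(2n^{3/2}))·cot((i − ½)π/n)·cot((j − ½)π/n) if 3k + 2 ≤ |i − j| ≤ 5k + 2, and m_{ij} = 0 otherwise. Then the squared Frobenius norm of M satisfies ∑_{i,j} |m_{ij}|² ≤ 9/32; in particular the operator norm of M is at most 3/4. -/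
/-!
In the band `3k + 2 ≤ |i - j| ≤ 5k + 2` the angles `θᵢ = (i - ½)π/n` satisfy
`3π/8 ≤ |θᵢ - θⱼ| ≤ 5π/8`, so `|cos (θᵢ - θⱼ)| ≤ sin (π/8) < 2/5`, and this forces
`cot² θᵢ cot² θⱼ ≤ 7/8 (csc² θᵢ + csc² θⱼ)`. Every row meets the band in at most `4k + 2 = n/2`
entries, so the squared Frobenius norm is at most `7/(32 n²) ∑ csc² θᵢ`. Comparing
`csc² θ ≤ θ⁻² + (π - θ)⁻² + 1` with `∑ (i + ½)⁻² ≤ 5` gives `∑ csc² θᵢ ≤ 10 n²/π² + n`, and then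
`7/32 (10/π² + 1/n) ≤ 9/32` for `n ≥ 4`. The operator norm is at most the Frobenius norm.
-/

open Real Finset

lemma abs_cos_le_two_fifths {x : ℝ} (h₁ : 3 * π / 8 ≤ |x|) (h₂ : |x| ≤ 5 * π / 8) :
    |cos x| ≤ 2 / 5 := by
  have hsin : sin (π / 8) ≤ π / 8 := sin_le (by positivity)
  have hcos₁ : cos |x| ≤ sin (π / 8) := by
    rw [← cos_pi_div_two_sub]
    exact cos_le_cos_of_nonneg_of_le_pi (by linarith [pi_pos]) (by linarith [pi_pos]) (by linarith)
  have hcos₂ : -sin (π / 8) ≤ cos |x| := by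
    rw [← cos_pi_div_two_sub, ← cos_pi_sub]
    exact cos_le_cos_of_nonneg_of_le_pi (abs_nonneg x) (by linarith [pi_pos]) (by linarith)
  rw [← cos_abs, abs_le]
  constructor <;> linarith [pi_lt_d2]

lemma abs_cos_mul_pi_div_le_two_fifths {k : ℕ} {d : ℤ} (h₁ : 3 * k + 2 ≤ |d|)
    (h₂ : |d| ≤ 5 * k + 2) : |cos (d * π / (8 * k + 4))| ≤ 2 / 5 := by
  have hd₁ : (3 * k + 2 : ℝ) ≤ |(d : ℝ)| := by exact_mod_cast h₁
  have hd₂ : |(d : ℝ)| ≤ 5 * k + 2 := by exact_mod_cast h₂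
  have hπ := pi_pos
  have habs : |(d : ℝ) * π / (8 * k + 4)| = |(d : ℝ)| * π / (8 * k + 4) := by
    rw [abs_div, abs_mul, abs_of_pos hπ, abs_of_pos (by positivity : (0 : ℝ) < 8 * k + 4)]
  apply abs_cos_le_two_fifths <;> rw [habs]
  · rw [le_div_iff₀ (by positivity)]
    nlinarith
  · rw [div_le_iff₀ (by positivity)]
    nlinarith

/-- With `u = cos (α - β)` and `v = cos (α + β)` this is `2 u² + 2 v² + 11 u v ≤ 7`, since
`2 cos α cos β = u + v` and `sin² α + sin² β = 1 - u v`. -/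
lemma sq_cos_mul_cos_le {α β : ℝ} (h : |cos (α - β)| ≤ 2 / 5) :
    (cos α * cos β) ^ 2 ≤ 7 / 8 * (sin α ^ 2 + sin β ^ 2) := by
  have hprod : 2 * (cos α * cos β) = cos (α - β) + cos (α + β) := by
    rw [cos_sub, cos_add]; ring
  have hsum : sin α ^ 2 + sin β ^ 2 = 1 - cos (α - β) * cos (α + β) := by
    rw [cos_sub, cos_add]
    linear_combination (cos β ^ 2) * sin_sq_add_cos_sq α + (1 - sin α ^ 2) * sin_sq_add_cos_sq β
  obtain ⟨hu₁, hu₂⟩ := abs_le.mp h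
  obtain ⟨hv₁, hv₂⟩ := abs_le.mp (abs_cos_le_one (α + β))
  rw [hsum]
  nlinarith [mul_nonneg (sub_nonneg.2 hu₂) (neg_le_iff_add_nonneg.1 hv₁),
    mul_nonneg (neg_le_iff_add_nonneg'.1 hu₁) (sub_nonneg.2 hv₂),
    mul_nonneg (sub_nonneg.2 hu₂) (neg_le_iff_add_nonneg'.1 hu₁),
    mul_nonneg (sub_nonneg.2 hv₂) (neg_le_iff_add_nonneg'.1 hv₁)]

lemma sq_cot_mul_cot_le {α β : ℝ} (h : |cos (α - β)| ≤ 2 / 5) :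
    (cot α * cot β) ^ 2 ≤ 7 / 8 * ((sin α ^ 2)⁻¹ + (sin β ^ 2)⁻¹) := by
  rw [cot_eq_cos_div_sin, cot_eq_cos_div_sin, div_mul_div_comm, div_pow]
  rcases eq_or_ne (sin α * sin β) 0 with h0 | h0
  · rw [h0, zero_pow two_ne_zero, div_zero]
    positivity
  · have hα : sin α ≠ 0 := left_ne_zero_of_mul h0
    have hβ : sin β ≠ 0 := right_ne_zero_of_mul h0
    rw [div_le_iff₀ (by positivity)]
    calc (cos α * cos β) ^ 2 ≤ 7 / 8 * (sin α ^ 2 + sin β ^ 2) := sq_cos_mul_cos_le h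
      _ = _ := by field_simp; ring

lemma inv_sin_sq_le_of_le_pi_div_two {θ : ℝ} (h₀ : 0 < θ) (h₁ : θ ≤ π / 2) :
    (sin θ ^ 2)⁻¹ ≤ (θ ^ 2)⁻¹ + 1 := by
  have hsin : 0 < sin θ := sin_pos_of_pos_of_lt_pi h₀ (by linarith [pi_pos])
  have hcos : 0 ≤ cos θ := cos_nonneg_of_mem_Icc ⟨by linarith, h₁⟩
  have hθcos : θ * cos θ ≤ sin θ := by
    rcases h₁.lt_or_eq with h₁ | rfl
    · have := le_tan h₀.le h₁
      rwa [tan_eq_sin_div_cos, le_div_iff₀ (cos_pos_of_mem_Ioo ⟨by linarith, h₁⟩)] at this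
    · simp
  have hcot : cos θ / sin θ ≤ θ⁻¹ := by
    rw [div_le_iff₀ hsin, inv_mul_eq_div, le_div_iff₀ h₀]
    linarith
  calc (sin θ ^ 2)⁻¹ = (cos θ / sin θ) ^ 2 + 1 := by
        field_simp
        linear_combination -sin_sq_add_cos_sq θ
    _ ≤ (θ ^ 2)⁻¹ + 1 := by
        rw [← inv_pow]
        gcongr

lemma inv_sin_sq_le {θ : ℝ} (h₀ : 0 < θ) (h₁ : θ < π) :
    (sin θ ^ 2)⁻¹ ≤ (θ ^ 2)⁻¹ + ((π - θ) ^ 2)⁻¹ + 1 := by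
  rcases le_total θ (π / 2) with h | h
  · linarith [inv_sin_sq_le_of_le_pi_div_two h₀ h, inv_nonneg.2 (sq_nonneg (π - θ))]
  · rw [← sin_pi_sub]
    linarith [inv_sin_sq_le_of_le_pi_div_two (sub_pos.2 h₁) (by linarith),
      inv_nonneg.2 (sq_nonneg θ)]

lemma sum_range_succ_inv_sq_add_half_le (m : ℕ) :
    ∑ i ∈ range (m + 1), (((i : ℝ) + 1 / 2) ^ 2)⁻¹ ≤ 5 - ((m : ℝ) + 1)⁻¹ := by
  induction m with
  | zero => norm_num
  | succ m ih =>
    have hstep : (((m : ℝ) + 1 + 1 / 2) ^ 2)⁻¹ ≤ ((m : ℝ) + 1)⁻¹ - ((m : ℝ) + 1 + 1)⁻¹ := by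
      rw [inv_sub_inv (by positivity) (by positivity), add_sub_cancel_left,
        ← one_div]
      exact one_div_le_one_div_of_le (by positivity) (by nlinarith)
    rw [sum_range_succ]
    push_cast at hstep ⊢
    linarith

lemma sum_range_inv_sq_add_half_le (m : ℕ) :
    ∑ i ∈ range m, (((i : ℝ) + 1 / 2) ^ 2)⁻¹ ≤ 5 := by
  cases m with
  | zero => norm_num
  | succ m =>
    have : (0 : ℝ) ≤ ((m : ℝ) + 1)⁻¹ := by positivity
    linarith [sum_range_succ_inv_sq_add_half_le m]

lemma sum_range_inv_sin_sq_le (n : ℕ) :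
    ∑ i ∈ range n, (sin (((i : ℝ) + 1 / 2) * π / n) ^ 2)⁻¹ ≤ 10 * n ^ 2 / π ^ 2 + n := by
  set f : ℕ → ℝ := fun i => (((i : ℝ) + 1 / 2) ^ 2)⁻¹ with hf
  have hterm : ∀ i ∈ range n,
      (sin (((i : ℝ) + 1 / 2) * π / n) ^ 2)⁻¹ ≤ (n / π) ^ 2 * (f i + f (n - 1 - i)) + 1 := by
    intro i hi
    have hi : i < n := mem_range.1 hi
    have hn : (0 : ℝ) < n := by exact_mod_cast i.zero_le.trans_lt hi
    have hi' : (i : ℝ) + 1 / 2 < n := by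
      have : (i : ℝ) + 1 ≤ n := by exact_mod_cast hi
      linarith
    have hrefl : π - ((i : ℝ) + 1 / 2) * π / n = (((n - 1 - i : ℕ) : ℝ) + 1 / 2) * π / n := by
      rw [Nat.cast_sub (by omega), Nat.cast_sub (by omega)]
      field_simp
      ring
    calc _ ≤ _ := inv_sin_sq_le (by positivity) (by rw [div_lt_iff₀ hn]; nlinarith [pi_pos])
      _ = _ := by
        rw [hrefl, hf]
        field_simp
  calc _ ≤ ∑ i ∈ range n, ((n / π) ^ 2 * (f i + f (n - 1 - i)) + 1) := sum_le_sum hterm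
    _ = (n / π) ^ 2 * (2 * ∑ i ∈ range n, f i) + n := by
        rw [sum_add_distrib, ← mul_sum, sum_add_distrib, sum_range_reflect f n]
        simp only [sum_const, card_range, nsmul_eq_mul, mul_one]
        ring
    _ ≤ (n / π) ^ 2 * (2 * 5) + n := by grw [sum_range_inv_sq_add_half_le n]
    _ = _ := by ring

lemma card_filter_abs_sub_le {n : ℕ} (i : Fin n) (a b : ℤ) :
    #{j : Fin n | a ≤ |(i : ℤ) - j| ∧ |(i : ℤ) - j| ≤ b} ≤ 2 * (b + 1 - a).toNat := by
  calc _ ≤ #(Icc (-b) (-a) ∪ Icc a b) := by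
        refine card_le_card_of_injOn (fun j => (i : ℤ) - j) (fun j hj => ?_) ?_
        · simp only [coe_filter, Set.mem_ofPred_eq, mem_univ, true_and] at hj
          simp only [coe_union, coe_Icc, Set.mem_union, Set.mem_Icc]
          rcases abs_cases ((i : ℤ) - j) with ⟨h, _⟩ | ⟨h, _⟩ <;> omega
        · intro j _ j' _ h
          exact Fin.ext (by simpa using h)
    _ ≤ 2 * (b + 1 - a).toNat := by
        grw [card_union_le, Int.card_Icc, Int.card_Icc]
        omega

lemma sum_sum_ite_add_le {ι : Type*} [Fintype ι] (B : ι → ι → Prop) [DecidableRel B]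
    [Std.Symm B] {c : ℕ} (hc : ∀ i, #{j | B i j} ≤ c) {s : ι → ℝ} (hs : ∀ i, 0 ≤ s i) :
    ∑ i, ∑ j, (if B i j then s i + s j else 0) ≤ 2 * c * ∑ i, s i := by
  have hswap : ∑ i, ∑ j, (if B i j then s j else 0) = ∑ i, ∑ j, (if B i j then s i else 0) := by
    rw [sum_comm]
    simp only [Std.Symm.iff]
  have hrow : ∀ i, ∑ j, (if B i j then s i else 0) ≤ c * s i := by
    intro i
    rw [← sum_filter, sum_const, nsmul_eq_mul]
    gcongr
    · exact hs i
    · exact_mod_cast hc i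
  calc ∑ i, ∑ j, (if B i j then s i + s j else 0)
      = 2 * ∑ i, ∑ j, (if B i j then s i else 0) := by
        simp only [ite_add_zero, sum_add_distrib, hswap]
        ring
    _ ≤ 2 * ∑ i, c * s i := by grw [sum_le_sum fun i _ => hrow i]
    _ = 2 * c * ∑ i, s i := by rw [← mul_sum, mul_assoc]

lemma sum_sq_ite_mul_cot_mul_cot_le {ι : Type*} [Fintype ι] (B : ι → ι → Prop) [DecidableRel B]
    [Std.Symm B] {c : ℕ} (hc : ∀ i, #{j | B i j} ≤ c) {θ : ι → ℝ}
    (hθ : ∀ i j, B i j → |cos (θ i - θ j)| ≤ 2 / 5) (a : ℝ) :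
    ∑ i, ∑ j, |if B i j then a * cot (θ i) * cot (θ j) else 0| ^ 2 ≤
      7 / 4 * a ^ 2 * c * ∑ i, (sin (θ i) ^ 2)⁻¹ := by
  set s : ι → ℝ := fun i => (sin (θ i) ^ 2)⁻¹
  calc _ ≤ ∑ i, ∑ j, 7 / 8 * a ^ 2 * (if B i j then s i + s j else 0) := by
        refine sum_le_sum fun i _ => sum_le_sum fun j _ => ?_
        split_ifs with h
        · rw [sq_abs, mul_assoc, mul_pow, mul_comm (7 / 8), mul_assoc]
          gcongr
          exact sq_cot_mul_cot_le (hθ i j h)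
        · simp
    _ = 7 / 8 * a ^ 2 * ∑ i, ∑ j, (if B i j then s i + s j else 0) := by simp only [mul_sum]
    _ ≤ 7 / 8 * a ^ 2 * (2 * c * ∑ i, s i) := by
        grw [sum_sum_ite_add_le B hc fun i => by positivity]
    _ = _ := by ring

section Frobenius

open Matrix

attribute [local instance] Matrix.frobeniusNormedAddCommGroup

lemma norm_toEuclideanCLM_le_sqrt_sum_sq {𝕜 n : Type*} [RCLike 𝕜] [Fintype n] [DecidableEq n]
    (A : Matrix n n 𝕜) :
    ‖toEuclideanCLM (𝕜 := 𝕜) A‖ ≤ √(∑ i, ∑ j, ‖A i j‖ ^ 2) := by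
  have hA : ‖A‖ = √(∑ i, ∑ j, ‖A i j‖ ^ 2) := by
    rw [frobenius_norm_def, sqrt_eq_rpow]
    simp only [rpow_two]
  refine ContinuousLinearMap.opNorm_le_bound _ (sqrt_nonneg _) fun x => ?_
  calc ‖toEuclideanCLM (𝕜 := 𝕜) A x‖
      = ‖replicateCol Unit (A *ᵥ x)‖ := by rw [frobenius_norm_replicateCol]; rfl
    _ = ‖A * replicateCol Unit x‖ := by rw [replicateCol_mulVec]
    _ ≤ ‖A‖ * ‖replicateCol Unit x‖ := frobenius_norm_mul _ _
    _ = _ := by rw [frobenius_norm_replicateCol, hA]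

end Frobenius

/-- For `n = 8k + 4`, the matrix `M` with entries
`m_{ij} = cot((i−½)π/n)·cot((j−½)π/n)/(2n^{3/2})` when `3k+2 ≤ |i−j| ≤ 5k+2` and `0`
otherwise has squared Frobenius norm at most `9/32`; in particular its operator norm
(induced by the Euclidean norm on `ℂⁿ`) is at most `3/4`. -/
theorem matrix_M_frobenius_bound (k : ℕ) (n : ℕ) (hn : n = 8 * k + 4)
    (M : Matrix (Fin n) (Fin n) ℝ)
    (hM : ∀ i j : Fin n, M i j =
      if 3 * k + 2 ≤ |(i : ℤ) - (j : ℤ)| ∧ |(i : ℤ) - (j : ℤ)| ≤ 5 * k + 2 then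
        (2 * (n : ℝ) ^ ((3 : ℝ) / 2))⁻¹ *
          Real.cot ((((i : ℕ) + 1 : ℝ) - 1 / 2) * π / n) *
          Real.cot ((((j : ℕ) + 1 : ℝ) - 1 / 2) * π / n)
      else 0) :
    (∑ i : Fin n, ∑ j : Fin n, |M i j| ^ 2) ≤ 9 / 32 ∧
    ‖Matrix.toEuclideanCLM (𝕜 := ℂ) (M.map Complex.ofReal)‖ ≤ 3 / 4 := by
  let B : Fin n → Fin n → Prop := fun i j => 3 * k + 2 ≤ |(i : ℤ) - j| ∧ |(i : ℤ) - j| ≤ 5 * k + 2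
  have : Std.Symm B := ⟨fun i j h => by simpa only [B, abs_sub_comm] using h⟩
  let θ : Fin n → ℝ := fun i => (((i : ℕ) + 1 : ℝ) - 1 / 2) * π / n
  have hnk : (n : ℝ) = 8 * k + 4 := by exact_mod_cast hn
  have hθ : ∀ i j, B i j → |cos (θ i - θ j)| ≤ 2 / 5 := fun i j hij => by
    convert abs_cos_mul_pi_div_le_two_fifths hij.1 hij.2 using 3
    simp only [θ, hnk]; push_cast; ring
  have hsin : ∑ i, (sin (θ i) ^ 2)⁻¹ ≤ 10 * n ^ 2 / π ^ 2 + n := by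
    convert (Fin.sum_univ_eq_sum_range _ n).trans_le (sum_range_inv_sin_sq_le n) using 4
    simp only [θ]
    ring_nf
  have hscale : ((2 * (n : ℝ) ^ ((3 : ℝ) / 2))⁻¹) ^ 2 = (4 * (n : ℝ) ^ 3)⁻¹ := by
    rw [inv_pow, mul_pow, ← rpow_mul_natCast n.cast_nonneg]
    norm_num
  have hfrob : ∑ i, ∑ j, |M i j| ^ 2 ≤ 9 / 32 := by
    have hπ : 3.14 < π := pi_gt_d2
    have hn4 : (4 : ℝ) ≤ n := by rw [hnk]; linarith [k.cast_nonneg (α := ℝ)]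
    simp only [hM]
    calc _ ≤ 7 / 4 * (4 * (n : ℝ) ^ 3)⁻¹ * (4 * k + 2 : ℕ) * (10 * n ^ 2 / π ^ 2 + n) := by
          grw [sum_sq_ite_mul_cot_mul_cot_le B (c := 4 * k + 2)
            (fun i => (card_filter_abs_sub_le i _ _).trans_eq (by omega)) hθ, hscale, hsin]
      _ = 7 / 32 * (10 / π ^ 2 + 1 / n) := by
          rw [show ((4 * k + 2 : ℕ) : ℝ) = n / 2 by push_cast; linarith]
          field_simp
          ring
      _ ≤ 7 / 32 * (10 / 3.14 ^ 2 + 1 / 4) := by gcongr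
      _ ≤ 9 / 32 := by norm_num
  refine ⟨hfrob, (norm_toEuclideanCLM_le_sqrt_sum_sq _).trans ?_⟩
  simp only [Matrix.map_apply, Complex.norm_real, norm_eq_abs]
  exact sqrt_le_iff.2 ⟨by norm_num, by linarith⟩
end
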